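/- arXiv:2209.02938 — 12 statements merged into one kernel-verified Lean document; each statement's English description precedes it below -/
import Mathlib

section
/- Let λ ∈ ℝ \ {0}, let Θ ⊆ ℝ^d be open and convex, and let φ : Θ → ℝ be smooth with Φ_λ := (1/λ)(exp(λφ) − 1) convex on Θ. Then for all θ, θ' ∈ Θ with 1 + λ⟨∇φ(θ'), θ − θ'⟩ > 0 one has L_{λ,φ}[θ : θ'] ≥ 0. Moreover, if Φ_λ is strictly convex on Θ, then L_{λ,φ}[θ : θ'] = 0 if and only if θ = θ'. -/
open Real Set
open scoped RealInnerProductSpace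

/-- The λ-logarithmic divergence `L_{λ,φ}[θ : θ']`. -/
noncomputable def Llog (lam : ℝ) {d : ℕ} (φ : EuclideanSpace ℝ (Fin d) → ℝ)
    (θ θ' : EuclideanSpace ℝ (Fin d)) : ℝ :=
  φ θ - φ θ' - (1 / lam) * Real.log (1 + lam * ⟪gradient φ θ', θ - θ'⟫)

/-- `Φ_λ = (1/λ)(exp(λφ) − 1)`. -/
noncomputable def Philam (lam : ℝ) {d : ℕ} (φ : EuclideanSpace ℝ (Fin d) → ℝ)
    (θ : EuclideanSpace ℝ (Fin d)) : ℝ :=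
  (1 / lam) * (Real.exp (lam * φ θ) - 1)

/-- The Bregman divergence `B_g[θ : θ']`. -/
noncomputable def Breg {d : ℕ} (g : EuclideanSpace ℝ (Fin d) → ℝ)
    (θ θ' : EuclideanSpace ℝ (Fin d)) : ℝ :=
  g θ - g θ' - ⟪gradient g θ', θ - θ'⟫

/-- The metric matrix `G_λ(θ) = ∇²φ(θ) + λ∇φ(θ)∇φ(θ)ᵀ` applied to the vector `v`. -/
noncomputable def Glam (lam : ℝ) {d : ℕ} (φ : EuclideanSpace ℝ (Fin d) → ℝ)
    (θ v : EuclideanSpace ℝ (Fin d)) : EuclideanSpace ℝ (Fin d) :=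
  fderiv ℝ (gradient φ) θ v + (lam * ⟪gradient φ θ, v⟫) • gradient φ θ

/-- The λ-mirror map `∇^{(λ)}φ(θ) = ∇φ(θ)/(1 − λ⟨∇φ(θ), θ⟩)`. -/
noncomputable def mirrorMap (lam : ℝ) {d : ℕ} (φ : EuclideanSpace ℝ (Fin d) → ℝ)
    (θ : EuclideanSpace ℝ (Fin d)) : EuclideanSpace ℝ (Fin d) :=
  (1 - lam * ⟪gradient φ θ, θ⟫)⁻¹ • gradient φ θ

/-- `φ` is regular `c_λ`-convex on `Θ`: smooth, `Φ_λ` convex with positive definite Hessian,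
and `1 − λ⟨∇φ(θ), θ⟩ > 0` on `Θ`. -/
def IsRegularCConvex (lam : ℝ) {d : ℕ} (Θ : Set (EuclideanSpace ℝ (Fin d)))
    (φ : EuclideanSpace ℝ (Fin d) → ℝ) : Prop :=
  ContDiffOn ℝ (⊤ : ℕ∞) φ Θ ∧
  ConvexOn ℝ Θ (Philam lam φ) ∧
  (∀ θ ∈ Θ, ∀ v, v ≠ 0 → 0 < ⟪v, fderiv ℝ (gradient (Philam lam φ)) θ v⟫) ∧
  (∀ θ ∈ Θ, 0 < 1 - lam * ⟪gradient φ θ, θ⟫)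

/-- `θ` (with derivative `dθ`) is a conformal mirror descent trajectory for `f` on `I`:
`G_λ(θ_t) θ'_t = −∇f(θ_t)` for all `t ∈ I`. -/
def IsCMDTrajectory (lam : ℝ) {d : ℕ} (φ f : EuclideanSpace ℝ (Fin d) → ℝ)
    (I : Set ℝ) (θ dθ : ℝ → EuclideanSpace ℝ (Fin d)) : Prop :=
  ∀ t ∈ I, HasDerivAt θ (dθ t) t ∧ Glam lam φ (θ t) (dθ t) = -(gradient f (θ t))

lemma aux_key_le (lam p q s : ℝ) (hlam : lam ≠ 0) (hB : 0 < 1 + lam * s)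
    (h : Real.exp (lam * q) * s ≤ (1 / lam) * (Real.exp (lam * p) - Real.exp (lam * q))) :
    0 ≤ p - q - (1 / lam) * Real.log (1 + lam * s) := by
  rcases hlam.lt_or_gt with hneg | hpos
  · rw [one_div, inv_mul_eq_div, le_div_iff_of_neg hneg] at h
    have hexp : Real.exp (lam * p) ≤ (1 + lam * s) * Real.exp (lam * q) := by nlinarith
    have hlog : lam * (p - q) ≤ Real.log (1 + lam * s) := by
      rw [Real.le_log_iff_exp_le hB, show lam * (p - q) = lam * p - lam * q by ring,
        Real.exp_sub, div_le_iff₀ (Real.exp_pos _)]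
      linarith [hexp]
    have h2 : (1/lam) * Real.log (1 + lam * s) ≤ (1/lam) * (lam * (p - q)) :=
      mul_le_mul_of_nonpos_left hlog (one_div_neg.2 hneg).le
    have h3 : (1/lam) * (lam * (p - q)) = p - q := by field_simp
    linarith
  · rw [one_div, inv_mul_eq_div, le_div_iff₀ hpos] at h
    have hexp : (1 + lam * s) * Real.exp (lam * q) ≤ Real.exp (lam * p) := by nlinarith
    have hlog : Real.log (1 + lam * s) ≤ lam * (p - q) := by
      rw [Real.log_le_iff_le_exp hB, show lam * (p - q) = lam * p - lam * q by ring,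
        Real.exp_sub, le_div_iff₀ (Real.exp_pos _)]
      linarith [hexp]
    have h2 : (1/lam) * Real.log (1 + lam * s) ≤ (1/lam) * (lam * (p - q)) :=
      mul_le_mul_of_nonneg_left hlog (by positivity)
    have h3 : (1/lam) * (lam * (p - q)) = p - q := by field_simp
    linarith

lemma aux_key_lt (lam p q s : ℝ) (hlam : lam ≠ 0) (hB : 0 < 1 + lam * s)
    (h : Real.exp (lam * q) * s < (1 / lam) * (Real.exp (lam * p) - Real.exp (lam * q))) :
    0 < p - q - (1 / lam) * Real.log (1 + lam * s) := by
  rcases hlam.lt_or_gt with hneg | hpos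
  · rw [one_div, inv_mul_eq_div, lt_div_iff_of_neg hneg] at h
    have hexp : Real.exp (lam * p) < (1 + lam * s) * Real.exp (lam * q) := by nlinarith
    have hlog : lam * (p - q) < Real.log (1 + lam * s) := by
      rw [Real.lt_log_iff_exp_lt hB, show lam * (p - q) = lam * p - lam * q by ring,
        Real.exp_sub, div_lt_iff₀ (Real.exp_pos _)]
      linarith [hexp]
    have h2 : (1/lam) * Real.log (1 + lam * s) < (1/lam) * (lam * (p - q)) :=
      mul_lt_mul_of_neg_left hlog (one_div_neg.2 hneg)
    have h3 : (1/lam) * (lam * (p - q)) = p - q := by field_simp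
    linarith
  · rw [one_div, inv_mul_eq_div, lt_div_iff₀ hpos] at h
    have hexp : (1 + lam * s) * Real.exp (lam * q) < Real.exp (lam * p) := by nlinarith
    have hlog : Real.log (1 + lam * s) < lam * (p - q) := by
      rw [Real.log_lt_iff_lt_exp hB, show lam * (p - q) = lam * p - lam * q by ring,
        Real.exp_sub, lt_div_iff₀ (Real.exp_pos _)]
      linarith [hexp]
    have h2 : (1/lam) * Real.log (1 + lam * s) < (1/lam) * (lam * (p - q)) :=
      mul_lt_mul_of_pos_left hlog (by positivity)
    have h3 : (1/lam) * (lam * (p - q)) = p - q := by field_simp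
    linarith

lemma aux_hasGradientAt_philam (lam : ℝ) (hlam : lam ≠ 0) {d : ℕ}
    (φ : EuclideanSpace ℝ (Fin d) → ℝ)
    (x : EuclideanSpace ℝ (Fin d)) (hφ : HasGradientAt φ (gradient φ x) x) :
    HasGradientAt (Philam lam φ) (Real.exp (lam * φ x) • gradient φ x) x := by
  have hF : HasFDerivAt φ (InnerProductSpace.toDual ℝ _ (gradient φ x)) x := hφ
  have hh : HasDerivAt (fun y : ℝ => (1 / lam) * (Real.exp (lam * y) - 1))
      (Real.exp (lam * φ x)) (φ x) := by
    have h1 : HasDerivAt (fun y : ℝ => lam * y) lam (φ x) := by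
      simpa using (hasDerivAt_id (φ x)).const_mul lam
    have h2 := (Real.hasDerivAt_exp (lam * φ x)).comp (φ x) h1
    have h3 := (h2.sub_const 1).const_mul (1 / lam)
    exact h3.congr_deriv (by field_simp)
  have hcomp := hh.comp_hasFDerivAt x hF
  rw [hasGradientAt_iff_hasFDerivAt, map_smul]
  exact hcomp

lemma aux_inner_grad_le {d : ℕ} {s : Set (EuclideanSpace ℝ (Fin d))}
    {f : EuclideanSpace ℝ (Fin d) → ℝ} (hf : ConvexOn ℝ s f)
    {x y g : EuclideanSpace ℝ (Fin d)} (hx : x ∈ s) (hy : y ∈ s)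
    (hg : HasGradientAt f g x) : ⟪g, y - x⟫ ≤ f y - f x := by
  set γ : ℝ →ᵃ[ℝ] EuclideanSpace ℝ (Fin d) := AffineMap.lineMap x y with hγ
  have hγconv : ConvexOn ℝ (γ ⁻¹' s) (f ∘ γ) := hf.comp_affineMap γ
  have hsub : Icc (0:ℝ) 1 ⊆ γ ⁻¹' s := by
    intro t ht
    have : γ t ∈ segment ℝ x y := by
      rw [segment_eq_image_lineMap]; exact ⟨t, ht, rfl⟩
    exact hf.1.segment_subset hx hy this
  have hconv2 : ConvexOn ℝ (Icc (0:ℝ) 1) (f ∘ γ) := hγconv.subset hsub (convex_Icc 0 1)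
  have hline : HasDerivAt (fun t : ℝ => γ t) (y - x) 0 := by
    have : HasDerivAt (fun t : ℝ => t • (y - x) + x) ((1:ℝ) • (y - x)) 0 :=
      ((hasDerivAt_id (0:ℝ)).smul_const (y - x)).add_const x
    simp only [one_smul] at this
    have heq : (fun t : ℝ => γ t) = fun t : ℝ => t • (y - x) + x := by
      funext t; simp [hγ, AffineMap.lineMap_apply]
    rw [heq]; exact this
  have hF : HasFDerivAt f (InnerProductSpace.toDual ℝ _ g) x := hg
  have hγ0 : γ 0 = x := AffineMap.lineMap_apply_zero x y
  have hd : HasDerivAt (f ∘ γ) ⟪g, y - x⟫ 0 := by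
    have := (hγ0 ▸ hF).comp_hasDerivAt 0 hline
    simpa [InnerProductSpace.toDual_apply_apply] using this
  have hslope := hconv2.le_slope_of_hasDerivAt (left_mem_Icc.2 zero_le_one)
    (right_mem_Icc.2 zero_le_one) one_pos hd
  have hγ1 : γ 1 = y := AffineMap.lineMap_apply_one x y
  have : slope (f ∘ γ) 0 1 = f y - f x := by
    simp [slope, hγ0, hγ1, Function.comp]
  linarith [hslope, this.le, this.ge]

lemma aux_inner_grad_lt {d : ℕ} {s : Set (EuclideanSpace ℝ (Fin d))}
    {f : EuclideanSpace ℝ (Fin d) → ℝ} (hf : StrictConvexOn ℝ s f)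
    {x y g : EuclideanSpace ℝ (Fin d)} (hx : x ∈ s) (hy : y ∈ s) (hxy : x ≠ y)
    (hg : HasGradientAt f g x) : ⟪g, y - x⟫ < f y - f x := by
  set m : EuclideanSpace ℝ (Fin d) := (1/2 : ℝ) • x + (1/2 : ℝ) • y with hm
  have hms : m ∈ s := hf.1 hx hy (by norm_num) (by norm_num) (by norm_num)
  have hstrict : f m < (1/2) * f x + (1/2) * f y := by
    have := hf.2 hx hy hxy (by norm_num : (0:ℝ) < 1/2) (by norm_num : (0:ℝ) < 1/2)
      (by norm_num)
    rw [hm]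
    simpa [smul_eq_mul, one_div] using this
  have h1 : ⟪g, m - x⟫ ≤ f m - f x := aux_inner_grad_le hf.convexOn hx hms hg
  have hmx : m - x = (1/2 : ℝ) • (y - x) := by rw [hm]; module
  rw [hmx, real_inner_smul_right] at h1
  linarith

/-- nonnegativity of the λ-logarithmic divergence, and positivity
characterization under strict convexity of `Φ_λ`. -/
theorem stmt_0 {d : ℕ} (lam : ℝ) (hlam : lam ≠ 0)
    (Θ : Set (EuclideanSpace ℝ (Fin d))) (hopen : IsOpen Θ) (hconvΘ : Convex ℝ Θ)
    (φ : EuclideanSpace ℝ (Fin d) → ℝ) (hsmooth : ContDiffOn ℝ (⊤ : ℕ∞) φ Θ)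
    (hconv : ConvexOn ℝ Θ (Philam lam φ))
    (θ θ' : EuclideanSpace ℝ (Fin d)) (hθ : θ ∈ Θ) (hθ' : θ' ∈ Θ)
    (hpos : 0 < 1 + lam * ⟪gradient φ θ', θ - θ'⟫) :
    0 ≤ Llog lam φ θ θ' ∧
      (StrictConvexOn ℝ Θ (Philam lam φ) → (Llog lam φ θ θ' = 0 ↔ θ = θ')) := by
  
  have hφdiff : DifferentiableAt ℝ φ θ' :=
    (hsmooth.contDiffAt (hopen.mem_nhds hθ')).differentiableAt (by simp)
  have hgφ : HasGradientAt φ (gradient φ θ') θ' := hφdiff.hasGradientAt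
  have hΦ : HasGradientAt (Philam lam φ) (Real.exp (lam * φ θ') • gradient φ θ') θ' :=
    aux_hasGradientAt_philam lam hlam φ θ' hgφ
  set s : ℝ := ⟪gradient φ θ', θ - θ'⟫ with hs
  have hring : (1/lam) * (Real.exp (lam * φ θ) - Real.exp (lam * φ θ')) =
      (1/lam) * (Real.exp (lam * φ θ) - 1) - (1/lam) * (Real.exp (lam * φ θ') - 1) := by ring
  have hmain : Real.exp (lam * φ θ') * s ≤
      (1/lam) * (Real.exp (lam * φ θ) - Real.exp (lam * φ θ')) := by
    have h1 := aux_inner_grad_le hconv hθ' hθ hΦ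
    rw [real_inner_smul_left] at h1
    rw [hring]
    simpa only [Philam] using h1
  have h0 : 0 ≤ Llog lam φ θ θ' := by
    have := aux_key_le lam (φ θ) (φ θ') s hlam hpos hmain
    simpa only [Llog] using this
  refine ⟨h0, fun hsc => ⟨fun hL => ?_, fun h => by simp [Llog, h]⟩⟩
  by_contra hne
  have hlt : Real.exp (lam * φ θ') * s <
      (1/lam) * (Real.exp (lam * φ θ) - Real.exp (lam * φ θ')) := by
    have h1 := aux_inner_grad_lt hsc hθ' hθ (fun hh => hne hh.symm) hΦ
    rw [real_inner_smul_left] at h1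
    rw [hring]
    simpa only [Philam] using h1
  have hgt : 0 < Llog lam φ θ θ' := by
    have := aux_key_lt lam (φ θ) (φ θ') s hlam hpos hlt
    simpa only [Llog] using this
  linarith [hgt, hL.le, hL.ge]
end

section
/- Let λ ∈ ℝ \ {0}, let Θ ⊆ ℝ^d be open and convex, and let φ : Θ → ℝ be smooth. For all θ, θ' ∈ Θ with 1 + λ⟨∇φ(θ'), θ − θ'⟩ > 0, one has 1 − λ e^{−λφ(θ)} B_{Φ_λ}[θ : θ'] > 0 and L_{λ,φ}[θ : θ'] = (−1/λ) log(1 − λ e^{−λφ(θ)} B_{Φ_λ}[θ : θ']), where Φ_λ := (1/λ)(exp(λφ) − 1). -/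
open Real Set
open scoped RealInnerProductSpace

lemma grad_Philam {d : ℕ} (lam : ℝ) (hlam : lam ≠ 0)
    (φ : EuclideanSpace ℝ (Fin d) → ℝ)
    (θ' : EuclideanSpace ℝ (Fin d)) (hφ : DifferentiableAt ℝ φ θ') :
    gradient (Philam lam φ) θ' = Real.exp (lam * φ θ') • gradient φ θ' := by
  have h1 : HasFDerivAt (fun x => lam * φ x) (lam • fderiv ℝ φ θ') θ' :=
    (hφ.hasFDerivAt).const_mul lam
  have h2 := h1.exp
  have h3 := (h2.sub_const 1).const_mul (1 / lam)
  have h4 : HasFDerivAt (Philam lam φ)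
      (Real.exp (lam * φ θ') • fderiv ℝ φ θ') θ' := by
    refine h3.congr_fderiv ?_
    rw [smul_smul, smul_smul]
    congr 1
    field_simp
  rw [gradient, h4.fderiv, map_smul]
  rfl

/-- the λ-logarithmic divergence is a monotone transformation of the
left conformal Bregman divergence of `Φ_λ`. -/
theorem stmt_1 {d : ℕ} (lam : ℝ) (hlam : lam ≠ 0)
    (Θ : Set (EuclideanSpace ℝ (Fin d))) (hopen : IsOpen Θ) (hconvΘ : Convex ℝ Θ)
    (φ : EuclideanSpace ℝ (Fin d) → ℝ) (hsmooth : ContDiffOn ℝ (⊤ : ℕ∞) φ Θ)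
    (θ θ' : EuclideanSpace ℝ (Fin d)) (hθ : θ ∈ Θ) (hθ' : θ' ∈ Θ)
    (hpos : 0 < 1 + lam * ⟪gradient φ θ', θ - θ'⟫) :
    0 < 1 - lam * Real.exp (-(lam * φ θ)) * Breg (Philam lam φ) θ θ' ∧
      Llog lam φ θ θ' =
        (-1 / lam) * Real.log (1 - lam * Real.exp (-(lam * φ θ)) * Breg (Philam lam φ) θ θ') := by
  have hdiff : DifferentiableAt ℝ φ θ' :=
    (hsmooth.contDiffAt (hopen.mem_nhds hθ')).differentiableAt (by simp)
  have hg : gradient (Philam lam φ) θ' = Real.exp (lam * φ θ') • gradient φ θ' :=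
    grad_Philam lam hlam φ θ' hdiff
  set X := ⟪gradient φ θ', θ - θ'⟫ with hX
  have hB : Breg (Philam lam φ) θ θ' =
      (1 / lam) * (Real.exp (lam * φ θ) - Real.exp (lam * φ θ')) -
        Real.exp (lam * φ θ') * X := by
    simp only [Breg, Philam, hg, real_inner_smul_left, ← hX]
    ring
  have key : 1 - lam * Real.exp (-(lam * φ θ)) * Breg (Philam lam φ) θ θ' =
      Real.exp (lam * φ θ' - lam * φ θ) * (1 + lam * X) := by
    rw [hB, Real.exp_sub, Real.exp_neg]
    have h1 : Real.exp (lam * φ θ) ≠ 0 := Real.exp_ne_zero _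
    field_simp
    ring
  have hposval : 0 < 1 - lam * Real.exp (-(lam * φ θ)) * Breg (Philam lam φ) θ θ' := by
    rw [key]; positivity
  refine ⟨hposval, ?_⟩
  rw [key, Real.log_mul (Real.exp_ne_zero _) (ne_of_gt hpos), Real.log_exp, Llog, ← hX]
  field_simp
  ring
end

section
/- Let λ ∈ ℝ \ {0}, let Θ ⊆ ℝ^d be open and convex, and let φ : Θ → ℝ be a regular c_λ-convex function. For θ ∈ Θ let η(θ) := ∇^{(λ)}φ(θ) be the λ-mirror map. Then the Jacobian matrix Dη(θ) of η at θ satisfies Dη(θ) = (1 + λ⟨θ, η(θ)⟩) (I_d + λ η(θ) θ^T) G_λ(θ), where G_λ(θ) := ∇²φ(θ) + λ ∇φ(θ)∇φ(θ)^T and I_d is the d × d identity matrix. -/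
open Real Set
open scoped RealInnerProductSpace

lemma aux_alg {E : Type*} [AddCommGroup E] [Module ℝ E] (X Y : E) (lam t t' b c c' : ℝ)
    (ht : t' = t) (hc : c' = c) (h : 1 - lam * t ≠ 0) :
    (1 - lam * t)⁻¹ • X + (((1 - lam * t) ^ 2)⁻¹ * (lam * (b + c))) • Y =
      (1 + lam * ((1 - lam * t)⁻¹ * t')) •
        (X + (lam * b) • Y + (lam * (c' + lam * b * t')) • (1 - lam * t)⁻¹ • Y) := by
  subst ht hc
  match_scalars <;> field_simp <;> ring

/-- the Jacobian of the λ-mirror map satisfies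
`Dη(θ) = (1 + λ⟨θ, η(θ)⟩)(I_d + λη(θ)θᵀ)G_λ(θ)`. -/
theorem stmt_3 {d : ℕ} (lam : ℝ) (hlam : lam ≠ 0)
    (Θ : Set (EuclideanSpace ℝ (Fin d))) (hopen : IsOpen Θ) (hconvΘ : Convex ℝ Θ)
    (φ : EuclideanSpace ℝ (Fin d) → ℝ) (hreg : IsRegularCConvex lam Θ φ)
    (θ : EuclideanSpace ℝ (Fin d)) (hθ : θ ∈ Θ) :
    ∀ v : EuclideanSpace ℝ (Fin d),
      fderiv ℝ (mirrorMap lam φ) θ v =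
        (1 + lam * ⟪θ, mirrorMap lam φ θ⟫) •
          (Glam lam φ θ v + (lam * ⟪θ, Glam lam φ θ v⟫) • mirrorMap lam φ θ) := by
  intro v
  have hφ : ContDiffAt ℝ (⊤ : ℕ∞) φ θ := hreg.1.contDiffAt (hopen.mem_nhds hθ)
  have hfd : ContDiffAt ℝ 1 (fderiv ℝ φ) θ := hφ.fderiv_right (WithTop.coe_le_coe.mpr le_top)
  have hgc : ContDiffAt ℝ 1 (gradient φ) θ := by
    have := ((InnerProductSpace.toDual ℝ (EuclideanSpace ℝ (Fin d))).symm.contDiff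
      (n := 1)).comp_contDiffAt (x := θ) hfd
    exact this
  have hgdiff : DifferentiableAt ℝ (gradient φ) θ := hgc.differentiableAt one_ne_zero
  have hG : HasFDerivAt (gradient φ) (fderiv ℝ (gradient φ) θ) θ := hgdiff.hasFDerivAt
  have hne : (1 - lam * ⟪gradient φ θ, θ⟫) ≠ 0 := ne_of_gt (hreg.2.2.2 θ hθ)
  have hS := ((hG.inner ℝ (hasFDerivAt_id θ)).const_mul lam).const_sub 1
  have H := ((hasDerivAt_inv hne).comp_hasFDerivAt θ hS).smul hG
  have H' : HasFDerivAt (mirrorMap lam φ) _ θ := H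
  rw [H'.fderiv]
  simp only [Glam, mirrorMap, ContinuousLinearMap.add_apply, ContinuousLinearMap.smul_apply,
    ContinuousLinearMap.smulRight_apply, ContinuousLinearMap.comp_apply,
    ContinuousLinearMap.prod_apply, fderivInnerCLM_apply, ContinuousLinearMap.coe_id',
    ContinuousLinearMap.neg_apply, id_eq, inner_add_right, inner_smul_right, real_inner_smul_left,
    smul_eq_mul, neg_mul, mul_neg, neg_neg, Function.comp_apply]
  exact aux_alg (E := EuclideanSpace ℝ (Fin d)) ((fderiv ℝ (gradient φ) θ) v) (gradient φ θ)
    lam _ _ _ _ _ (real_inner_comm _ _) (real_inner_comm _ _) hne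
end

section
/- (Theorem 3.1, dynamics under the λ-mirror map.) Let λ ∈ ℝ \ {0}, let Θ ⊆ ℝ^d be open and convex, let φ : Θ → ℝ be regular c_λ-convex, and let f : Θ → ℝ be differentiable. Let θ : I → Θ be a conformal mirror descent trajectory for f on an interval I, and set η_t := ∇^{(λ)}φ(θ_t). Then for all t ∈ I, η is differentiable at t and η'_t = −(1 + λ⟨θ_t, η_t⟩) (∇f(θ_t) + λ⟨θ_t, ∇f(θ_t)⟩ η_t), i.e. η'_t = −Π_λ(θ_t)(I_d + λ η_t θ_t^T)∇f(θ_t) with Π_λ(θ_t) := 1 + λ⟨θ_t, η_t⟩. -/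
open Real Set
open scoped RealInnerProductSpace

/-- Theorem 3.1: dynamics of conformal mirror descent under the λ-mirror map:
`η'_t = −Π_λ(θ_t)(I_d + λη_tθ_tᵀ)∇f(θ_t)`. -/
theorem stmt_4 {d : ℕ} (lam : ℝ) (hlam : lam ≠ 0)
    (Θ : Set (EuclideanSpace ℝ (Fin d))) (hopen : IsOpen Θ) (hconvΘ : Convex ℝ Θ)
    (φ : EuclideanSpace ℝ (Fin d) → ℝ) (hreg : IsRegularCConvex lam Θ φ)
    (f : EuclideanSpace ℝ (Fin d) → ℝ) (hf : DifferentiableOn ℝ f Θ)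
    (I : Set ℝ) (hI : I.OrdConnected)
    (θ dθ : ℝ → EuclideanSpace ℝ (Fin d)) (hmem : ∀ t ∈ I, θ t ∈ Θ)
    (htraj : IsCMDTrajectory lam φ f I θ dθ) :
    ∀ t ∈ I,
      HasDerivAt (fun s => mirrorMap lam φ (θ s))
        (-((1 + lam * ⟪θ t, mirrorMap lam φ (θ t)⟫) •
            (gradient f (θ t) +
              (lam * ⟪θ t, gradient f (θ t)⟫) • mirrorMap lam φ (θ t)))) t := by
  intro t ht
  have hx : θ t ∈ Θ := hmem t ht
  obtain ⟨hθd, htraj_eq⟩ := htraj t ht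
  -- differentiability of gradient φ at θ t
  have hφx : ContDiffAt ℝ (⊤ : ℕ∞) φ (θ t) := (hreg.1.contDiffAt (hopen.mem_nhds hx))
  have hfd : DifferentiableAt ℝ (fderiv ℝ φ) (θ t) :=
    (hφx.fderiv_right (m := 1) (by exact WithTop.coe_le_coe.mpr le_top)).differentiableAt one_ne_zero
  have hgd : DifferentiableAt ℝ (gradient φ) (θ t) := by
    have : gradient φ = fun y =>
        (InnerProductSpace.toDual ℝ (EuclideanSpace ℝ (Fin d))).symm (fderiv ℝ φ y) := rfl
    rw [this]
    exact ((InnerProductSpace.toDual ℝ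
      (EuclideanSpace ℝ (Fin d))).symm.differentiableAt).comp (θ t) hfd
  have hGθ : HasDerivAt (fun s => gradient φ (θ s))
      (fderiv ℝ (gradient φ) (θ t) (dθ t)) t :=
    hgd.hasFDerivAt.comp_hasDerivAt t hθd
  have hinner : HasDerivAt (fun s => ⟪gradient φ (θ s), θ s⟫)
      (⟪gradient φ (θ t), dθ t⟫ + ⟪fderiv ℝ (gradient φ) (θ t) (dθ t), θ t⟫) t :=
    HasDerivAt.inner ℝ hGθ hθd
  have ha : HasDerivAt (fun s => 1 - lam * ⟪gradient φ (θ s), θ s⟫)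
      (-(lam * (⟪gradient φ (θ t), dθ t⟫ + ⟪fderiv ℝ (gradient φ) (θ t) (dθ t), θ t⟫))) t := by
    simpa using (hinner.const_mul lam).const_sub 1
  have hapos : 0 < 1 - lam * ⟪gradient φ (θ t), θ t⟫ := hreg.2.2.2 (θ t) hx
  have hane : (1 - lam * ⟪gradient φ (θ t), θ t⟫) ≠ 0 := ne_of_gt hapos
  have hinv := ha.inv hane
  have hD := hinv.smul hGθ
  have hfun : (fun s => mirrorMap lam φ (θ s)) =
      fun s => (1 - lam * ⟪gradient φ (θ s), θ s⟫)⁻¹ • gradient φ (θ s) := rfl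
  rw [hfun]
  refine HasDerivAt.congr_deriv hD ?_
  symm
  simp only [Pi.inv_apply]
  -- now prove the vector identity
  have hHu : fderiv ℝ (gradient φ) (θ t) (dθ t) =
      -(gradient f (θ t)) - (lam * ⟪gradient φ (θ t), dθ t⟫) • gradient φ (θ t) :=
    eq_sub_of_add_eq htraj_eq
  rw [hHu, mirrorMap]
  simp only [inner_sub_left, inner_neg_left, real_inner_smul_left, real_inner_smul_right]
  rw [real_inner_comm (θ t) (gradient φ (θ t)), real_inner_comm (θ t) (gradient f (θ t))]
  have hane' : 1 - lam * ⟪θ t, gradient φ (θ t)⟫ ≠ 0 := by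
    rw [real_inner_comm]; exact hane
  set A := ⟪θ t, gradient φ (θ t)⟫ with hA
  set B := ⟪gradient φ (θ t), dθ t⟫ with hB
  set C := ⟪θ t, gradient f (θ t)⟫ with hC
  clear_value A B C
  match_scalars <;> field_simp <;> ring
end

section
/- (Theorem 3.2, time change of Hessian gradient flow.) Let λ ∈ ℝ \ {0}, let Θ ⊆ ℝ^d be open and convex, let φ : Θ → ℝ be regular c_λ-convex with Φ_λ := (1/λ)(exp(λφ) − 1), and let f : Θ → ℝ be differentiable. Let θ̃ : [0,∞) → Θ be differentiable with ∇²Φ_λ(θ̃_s) θ̃'_s = −∇f(θ̃_s) for all s ≥ 0 (a Hessian gradient flow for Φ_λ), and let s : [0,∞) → [0,∞) be differentiable with s'_t = exp(λ φ(θ̃_{s_t})) for all t ≥ 0. Then θ_t := θ̃_{s_t} is a conformal mirror descent trajectory for f, i.e. G_λ(θ_t) θ'_t = −∇f(θ_t) for all t ≥ 0, where G_λ(θ) := ∇²φ(θ) + λ ∇φ(θ)∇φ(θ)^T. -/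
open Real Set
open scoped RealInnerProductSpace

section Aux

variable {d : ℕ}

/-- On an open set where `φ` is differentiable, the gradient of `Φ_λ` is
`exp(λφ) • ∇φ`. -/
lemma hasGradientAt_Philam (lam : ℝ) (hlam : lam ≠ 0)
    (φ : EuclideanSpace ℝ (Fin d) → ℝ) (x : EuclideanSpace ℝ (Fin d))
    (hφ : DifferentiableAt ℝ φ x) :
    HasGradientAt (Philam lam φ) (Real.exp (lam * φ x) • gradient φ x) x := by
  have hD : HasFDerivAt φ (fderiv ℝ φ x) x := hφ.hasFDerivAt
  have h1 : HasFDerivAt (fun y => lam * φ y) (lam • fderiv ℝ φ x) x := hD.const_mul lam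
  have h2 := h1.exp
  have h3 := (h2.sub_const 1).const_mul (1 / lam)
  have h4 : HasFDerivAt (Philam lam φ)
      (Real.exp (lam * φ x) • fderiv ℝ φ x) x := by
    refine h3.congr_fderiv ?_
    ext w
    simp only [ContinuousLinearMap.smul_apply, smul_eq_mul]
    field_simp
  rw [hasGradientAt_iff_hasFDerivAt]
  refine h4.congr_fderiv ?_
  rw [map_smul]
  congr 1
  unfold gradient
  exact ((InnerProductSpace.toDual ℝ _).apply_symm_apply _).symm

end Aux

/-- Theorem 3.2: a time change `s_t` with `s'_t = exp(λφ(θ̃_{s_t}))` of a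
Hessian gradient flow `θ̃` for `Φ_λ` is a conformal mirror descent trajectory for `f`. -/
theorem stmt_5 {d : ℕ} (lam : ℝ) (hlam : lam ≠ 0)
    (Θ : Set (EuclideanSpace ℝ (Fin d))) (hopen : IsOpen Θ) (hconvΘ : Convex ℝ Θ)
    (φ : EuclideanSpace ℝ (Fin d) → ℝ) (hreg : IsRegularCConvex lam Θ φ)
    (f : EuclideanSpace ℝ (Fin d) → ℝ) (hf : DifferentiableOn ℝ f Θ)
    (θt dθt : ℝ → EuclideanSpace ℝ (Fin d))
    (hmem : ∀ s ∈ Set.Ici (0 : ℝ), θt s ∈ Θ)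
    (hflow : ∀ s ∈ Set.Ici (0 : ℝ), HasDerivAt θt (dθt s) s ∧
      fderiv ℝ (gradient (Philam lam φ)) (θt s) (dθt s) = -(gradient f (θt s)))
    (s : ℝ → ℝ) (hrange : ∀ t ∈ Set.Ici (0 : ℝ), s t ∈ Set.Ici (0 : ℝ))
    (hs : ∀ t ∈ Set.Ici (0 : ℝ), HasDerivAt s (Real.exp (lam * φ (θt (s t)))) t) :
    ∀ t ∈ Set.Ici (0 : ℝ), ∃ v : EuclideanSpace ℝ (Fin d),
      HasDerivAt (fun u => θt (s u)) v t ∧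
      Glam lam φ (θt (s t)) v = -(gradient f (θt (s t))) := by
  obtain ⟨hsm, -, -, -⟩ := hreg
  intro t ht
  have hst : s t ∈ Set.Ici (0 : ℝ) := hrange t ht
  set θ₀ := θt (s t) with hθ₀def
  have hθ₀ : θ₀ ∈ Θ := hmem _ hst
  have hnhds : Θ ∈ nhds θ₀ := hopen.mem_nhds hθ₀
  have hφC : ContDiffAt ℝ (⊤ : ℕ∞) φ θ₀ := hsm.contDiffAt hnhds
  -- ∇φ is smooth at θ₀
  have hDC : ContDiffAt ℝ (⊤ : ℕ∞) (fderiv ℝ φ) θ₀ := hφC.fderiv_right (by simp)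
  have hgradC : ContDiffAt ℝ (⊤ : ℕ∞) (gradient φ) θ₀ := by
    have hlin : ContDiff ℝ (⊤ : ℕ∞) (fun L : (EuclideanSpace ℝ (Fin d)) →L[ℝ] ℝ =>
        (InnerProductSpace.toDual ℝ (EuclideanSpace ℝ (Fin d))).symm L) :=
      (InnerProductSpace.toDual ℝ (EuclideanSpace ℝ (Fin d))).symm.toContinuousLinearEquiv.toContinuousLinearMap.contDiff
    exact hlin.contDiffAt.comp θ₀ hDC
  have hgraddiff : DifferentiableAt ℝ (gradient φ) θ₀ := hgradC.differentiableAt (by simp)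
  have hφdiff : DifferentiableAt ℝ φ θ₀ := hφC.differentiableAt (by simp)
  -- eventual equality of gradients
  have heq : gradient (Philam lam φ) =ᶠ[nhds θ₀]
      fun x => Real.exp (lam * φ x) • gradient φ x := by
    filter_upwards [hnhds] with x hx
    have hd : DifferentiableAt ℝ φ x :=
      (hsm.contDiffAt (hopen.mem_nhds hx)).differentiableAt (by simp)
    exact (hasGradientAt_Philam lam hlam φ x hd).gradient
  have hEq := heq.fderiv_eq (𝕜 := ℝ)
  -- fderiv of x ↦ exp(λφ x) • ∇φ x at θ₀
  have hc : HasFDerivAt (fun x => Real.exp (lam * φ x))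
      (Real.exp (lam * φ θ₀) • (lam • fderiv ℝ φ θ₀)) θ₀ :=
    (hφdiff.hasFDerivAt.const_mul lam).exp
  have hF := hc.smul hgraddiff.hasFDerivAt
  -- inner product identity: fderiv φ θ₀ w = ⟪∇φ θ₀, w⟫
  have hinner : ∀ w, fderiv ℝ φ θ₀ w = ⟪gradient φ θ₀, w⟫ := by
    intro w
    unfold gradient
    rw [InnerProductSpace.toDual_symm_apply]
  set c := Real.exp (lam * φ θ₀) with hc_def
  set w := dθt (s t) with hw_def
  refine ⟨c • w, ?_, ?_⟩
  · have hd1 := (hflow (s t) hst).1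
    have hd2 := hs t ht
    exact hd1.scomp (𝕜 := ℝ) t hd2
  · have hflow2 := (hflow (s t) hst).2
    rw [hEq, show (fun x => Real.exp (lam * φ x) • gradient φ x) = (fun x => Real.exp (lam * φ x)) • gradient φ from rfl, hF.fderiv] at hflow2
    simp only [ContinuousLinearMap.add_apply, ContinuousLinearMap.smul_apply,
      ContinuousLinearMap.smulRight_apply, smul_eq_mul, hinner] at hflow2
    rw [← hflow2]
    unfold Glam
    rw [(fderiv ℝ (gradient φ) θ₀).map_smul, real_inner_smul_right]
    congr 2
    ring
end

section
/- Let λ ∈ ℝ \ {0}, let Θ ⊆ ℝ^d be open and convex, and let φ : Θ → ℝ be regular c_λ-convex. Fix θ* ∈ Θ and set η* := ∇^{(λ)}φ(θ*). Then for every θ ∈ Θ with 1 + λ⟨∇φ(θ*), θ − θ*⟩ > 0, one has 1 + λ⟨θ, η*⟩ > 0 and the gradient of the map x ↦ L_{λ,φ}[x : θ*] at θ equals η/(1 + λ⟨θ, η⟩) − η*/(1 + λ⟨θ, η*⟩), where η := ∇^{(λ)}φ(θ). -/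
open Real Set
open scoped RealInnerProductSpace

/-- gradient of `x ↦ L_{λ,φ}[x : θ*]` expressed via the dual variables:
`∇L[· : θ*](θ) = η/(1 + λ⟨θ, η⟩) − η*/(1 + λ⟨θ, η*⟩)`. -/
theorem stmt_8 {d : ℕ} (lam : ℝ) (hlam : lam ≠ 0)
    (Θ : Set (EuclideanSpace ℝ (Fin d))) (hopen : IsOpen Θ) (hconvΘ : Convex ℝ Θ)
    (φ : EuclideanSpace ℝ (Fin d) → ℝ) (hreg : IsRegularCConvex lam Θ φ)
    (θstar : EuclideanSpace ℝ (Fin d)) (hθstar : θstar ∈ Θ)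
    (θ : EuclideanSpace ℝ (Fin d)) (hθ : θ ∈ Θ)
    (hpos : 0 < 1 + lam * ⟪gradient φ θstar, θ - θstar⟫) :
    0 < 1 + lam * ⟪θ, mirrorMap lam φ θstar⟫ ∧
    gradient (fun x => Llog lam φ x θstar) θ =
      (1 + lam * ⟪θ, mirrorMap lam φ θ⟫)⁻¹ • mirrorMap lam φ θ -
        (1 + lam * ⟪θ, mirrorMap lam φ θstar⟫)⁻¹ • mirrorMap lam φ θstar := by

  classical
  obtain ⟨hsmooth, -, -, hposall⟩ := hreg
  set g : EuclideanSpace ℝ (Fin d) := gradient φ θ with hg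
  set gs : EuclideanSpace ℝ (Fin d) := gradient φ θstar with hgs
  have hs : 0 < 1 - lam * ⟪g, θ⟫ := hposall θ hθ
  have hss : 0 < 1 - lam * ⟪gs, θstar⟫ := hposall θstar hθstar
  set A : ℝ := 1 + lam * ⟪gs, θ - θstar⟫ with hA
  have hAne : A ≠ 0 := ne_of_gt hpos
  have hssne : (1 - lam * ⟪gs, θstar⟫) ≠ 0 := ne_of_gt hss
  have hsne : (1 - lam * ⟪g, θ⟫) ≠ 0 := ne_of_gt hs
  -- key scalar identities
  have hkeyS : 1 + lam * ⟪θ, mirrorMap lam φ θstar⟫ = (1 - lam * ⟪gs, θstar⟫)⁻¹ * A := by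
    simp only [mirrorMap, real_inner_smul_right, ← hgs, hA, inner_sub_right,
      real_inner_comm θ gs]
    rw [show (1 : ℝ) + lam * (⟪θ, gs⟫ - ⟪gs, θstar⟫)
        = (1 - lam * ⟪gs, θstar⟫) + lam * ⟪θ, gs⟫ by ring, mul_add,
      inv_mul_cancel₀ hssne]
    ring
  have hsne' : (1 - lam * ⟪θ, g⟫) ≠ 0 := by rw [real_inner_comm]; exact hsne
  have hkey : 1 + lam * ⟪θ, mirrorMap lam φ θ⟫ = (1 - lam * ⟪g, θ⟫)⁻¹ := by
    simp only [mirrorMap, real_inner_smul_right, ← hg, real_inner_comm θ g]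
    linear_combination (-1 : ℝ) * inv_mul_cancel₀ hsne'
  have hposS : 0 < 1 + lam * ⟪θ, mirrorMap lam φ θstar⟫ := by
    rw [hkeyS]; exact mul_pos (inv_pos.mpr hss) hpos
  refine ⟨hposS, ?_⟩
  -- differentiability of φ at θ
  have hφdiff : DifferentiableAt ℝ φ θ :=
    (hsmooth.contDiffAt (hopen.mem_nhds hθ)).differentiableAt (by simp)
  have hgradφ : HasFDerivAt φ (InnerProductSpace.toDual ℝ _ g) θ := by
    rw [hg]
    exact hφdiff.hasGradientAt.hasFDerivAt
  -- derivative of the inner part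
  have hu : HasFDerivAt (fun x : EuclideanSpace ℝ (Fin d) => 1 + lam * ⟪gs, x - θstar⟫)
      (lam • innerSL ℝ gs) θ := by
    have h1 : HasFDerivAt (fun x : EuclideanSpace ℝ (Fin d) => ⟪gs, x⟫)
        (innerSL ℝ gs) θ := (innerSL ℝ gs).hasFDerivAt
    have h2 := ((h1.sub_const ⟪gs, θstar⟫).const_mul lam).const_add 1
    refine h2.congr_of_eventuallyEq (Filter.Eventually.of_forall fun x => ?_)
    simp [inner_sub_right]
  have hlog : HasFDerivAt
      (fun x : EuclideanSpace ℝ (Fin d) => Real.log (1 + lam * ⟪gs, x - θstar⟫))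
      (A⁻¹ • (lam • innerSL ℝ gs)) θ := by
    have := (Real.hasDerivAt_log hAne).comp_hasFDerivAt θ hu
    exact this
  have htotal : HasFDerivAt (fun x => Llog lam φ x θstar)
      (InnerProductSpace.toDual ℝ _ g - (1 / lam) • (A⁻¹ • (lam • innerSL ℝ gs))) θ := by
    have := (hgradφ.sub_const (φ θstar)).sub (hlog.const_mul (1 / lam))
    refine this.congr_of_eventuallyEq (Filter.Eventually.of_forall fun x => ?_)
    simp only [Llog, ← hgs, Pi.sub_apply]
  have hCLM : (InnerProductSpace.toDual ℝ _ g - (1 / lam) • (A⁻¹ • (lam • innerSL ℝ gs)))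
      = InnerProductSpace.toDual ℝ _ (g - A⁻¹ • gs) := by
    apply ContinuousLinearMap.ext
    intro x
    simp [InnerProductSpace.toDual_apply_apply, inner_sub_left, real_inner_smul_left]
    field_simp
  have hgradL : HasGradientAt (fun x => Llog lam φ x θstar) (g - A⁻¹ • gs) θ := by
    rw [hasGradientAt_iff_hasFDerivAt]
    rw [hCLM] at htotal
    exact htotal
  rw [hgradL.gradient]
  -- now the algebraic identification of the two sides
  have hterm1 : (1 + lam * ⟪θ, mirrorMap lam φ θ⟫)⁻¹ • mirrorMap lam φ θ = g := by
    rw [hkey, inv_inv, mirrorMap, ← hg, smul_smul, mul_inv_cancel₀ hsne, one_smul]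
  have hterm2 : (1 + lam * ⟪θ, mirrorMap lam φ θstar⟫)⁻¹ • mirrorMap lam φ θstar
      = A⁻¹ • gs := by
    rw [hkeyS, mirrorMap, ← hgs, smul_smul]
    congr 1
    rw [mul_inv, inv_inv, mul_comm (1 - lam * ⟪gs, θstar⟫) A⁻¹, mul_assoc,
      mul_inv_cancel₀ hssne, mul_one]
  rw [hterm1, hterm2]
end

section
/- (Proposition 3.3(i), primal flow.) Let λ ∈ ℝ \ {0}, let Θ ⊆ ℝ^d be open and convex, let φ : Θ → ℝ be regular c_λ-convex, and fix θ* ∈ Θ. Suppose θ : I → Θ is a conformal mirror descent trajectory for the function f(θ) := L_{λ,φ}[θ* : θ], where 1 + λ⟨∇φ(θ_t), θ* − θ_t⟩ > 0 for all t ∈ I. Then the trajectory follows a time-changed straight line toward θ* in the primal coordinates: there is a scalar function a : I → ℝ such that θ'_t = a_t (θ* − θ_t) for all t ∈ I. -/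
open Real Set
open scoped RealInnerProductSpace

section AuxProofStmt9

variable {d : ℕ}

local notation "EE" => EuclideanSpace ℝ (Fin d)

private noncomputable def dualSymmCLM (d : ℕ) :
    StrongDual ℝ (EuclideanSpace ℝ (Fin d)) →L[ℝ] EuclideanSpace ℝ (Fin d) where
  toFun y := (InnerProductSpace.toDual ℝ (EuclideanSpace ℝ (Fin d))).symm y
  map_add' a b := by simp
  map_smul' c a := by simp [starRingEnd_apply]
  cont := (InnerProductSpace.toDual ℝ _).symm.continuous

private lemma dualSymmCLM_apply (y : StrongDual ℝ EE) :
    dualSymmCLM d y = (InnerProductSpace.toDual ℝ EE).symm y := rfl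

private lemma gradient_hasFDerivAt_aux {φ : EE → ℝ} {x : EE} (hφ : ContDiffAt ℝ 2 φ x) :
    HasFDerivAt (gradient φ) (fderiv ℝ (gradient φ) x) x := by
  have h2 : DifferentiableAt ℝ (fderiv ℝ φ) x :=
    (hφ.fderiv_right (m := 1) (by norm_num)).differentiableAt one_ne_zero
  have h3 : DifferentiableAt ℝ (gradient φ) x :=
    ((dualSymmCLM d).differentiableAt).comp x h2
  exact h3.hasFDerivAt

private lemma gradient_fderiv_symm_aux {φ : EE → ℝ} {x : EE} (hφ : ContDiffAt ℝ 2 φ x)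
    (v w : EE) : ⟪fderiv ℝ (gradient φ) x v, w⟫ = ⟪fderiv ℝ (gradient φ) x w, v⟫ := by
  have h2 : HasFDerivAt (fderiv ℝ φ) (fderiv ℝ (fderiv ℝ φ) x) x :=
    ((hφ.fderiv_right (m := 1) (by norm_num)).differentiableAt one_ne_zero).hasFDerivAt
  have hc : HasFDerivAt (gradient φ)
      ((dualSymmCLM d).comp (fderiv ℝ (fderiv ℝ φ) x)) x :=
    ((dualSymmCLM d).hasFDerivAt).comp x h2
  have hsymm := hφ.isSymmSndFDerivAt (by norm_num)
  rw [hc.fderiv]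
  simp only [ContinuousLinearMap.comp_apply, dualSymmCLM_apply]
  rw [InnerProductSpace.toDual_symm_apply, InnerProductSpace.toDual_symm_apply]
  exact hsymm.eq v w

private lemma hasGradientAt_philam {lam : ℝ} (hlam : lam ≠ 0) {φ : EE → ℝ} {y : EE}
    (hy : DifferentiableAt ℝ φ y) :
    HasGradientAt (Philam lam φ) (Real.exp (lam * φ y) • gradient φ y) y := by
  have h1 : HasFDerivAt φ ((InnerProductSpace.toDual ℝ EE) (gradient φ y)) y :=
    hy.hasGradientAt.hasFDerivAt
  set L := (InnerProductSpace.toDual ℝ EE) (gradient φ y) with hL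
  have h2 : HasFDerivAt (fun z => lam * φ z) (lam • L) y := h1.const_mul lam
  have h3 : HasFDerivAt (fun z => Real.exp (lam * φ z))
      (Real.exp (lam * φ y) • (lam • L)) y := h2.exp
  have h4 : HasFDerivAt (Philam lam φ)
      ((1 / lam) • (Real.exp (lam * φ y) • (lam • L))) y := by
    have := (h3.sub_const 1).const_mul (1 / lam)
    exact this
  rw [hasGradientAt_iff_hasFDerivAt]
  have he : (InnerProductSpace.toDual ℝ EE) (Real.exp (lam * φ y) • gradient φ y)
      = (1 / lam) • (Real.exp (lam * φ y) • (lam • L)) := by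
    rw [map_smul, hL, smul_smul, smul_smul]
    congr 1
    field_simp
  rw [he]
  exact h4

private lemma fderiv_gradient_philam {lam : ℝ} (hlam : lam ≠ 0) {Θ : Set EE} (hopen : IsOpen Θ)
    {φ : EE → ℝ} (hφ : ContDiffOn ℝ (⊤ : ℕ∞) φ Θ) {x : EE} (hx : x ∈ Θ) (u : EE) :
    fderiv ℝ (gradient (Philam lam φ)) x u = Real.exp (lam * φ x) • Glam lam φ x u := by
  have hφx : ContDiffAt ℝ 2 φ x := ((hφ x hx).contDiffAt (hopen.mem_nhds hx)).of_le (WithTop.coe_le_coe.mpr le_top)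
  have hH : HasFDerivAt (gradient φ) (fderiv ℝ (gradient φ) x) x :=
    gradient_hasFDerivAt_aux hφx
  have hev : gradient (Philam lam φ) =ᶠ[nhds x]
      fun y => Real.exp (lam * φ y) • gradient φ y := by
    filter_upwards [hopen.mem_nhds hx] with y hy
    exact (hasGradientAt_philam hlam
      (((hφ y hy).contDiffAt (hopen.mem_nhds hy)).differentiableAt (by simp))).gradient
  rw [hev.fderiv_eq]
  have h1 : HasFDerivAt φ ((InnerProductSpace.toDual ℝ EE) (gradient φ x)) x :=
    ((hφx.differentiableAt (by norm_num)).hasGradientAt).hasFDerivAt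
  set L := (InnerProductSpace.toDual ℝ EE) (gradient φ x) with hL
  have hc : HasFDerivAt (fun z => Real.exp (lam * φ z))
      (Real.exp (lam * φ x) • (lam • L)) x := (h1.const_mul lam).exp
  have hs : HasFDerivAt (fun y => Real.exp (lam * φ y) • gradient φ y) _ x := hc.smul hH
  rw [hs.fderiv]
  simp only [ContinuousLinearMap.add_apply, ContinuousLinearMap.coe_smul',
    Pi.smul_apply, ContinuousLinearMap.smulRight_apply, hL,
    InnerProductSpace.toDual_apply_apply, Glam, smul_add, smul_smul]
  congr 1
  rw [smul_eq_mul]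
  ring_nf

private lemma Glam_sub_aux (lam : ℝ) (φ : EE → ℝ) (x v w : EE) :
    Glam lam φ x (v - w) = Glam lam φ x v - Glam lam φ x w := by
  simp only [Glam, map_sub, inner_sub_right, mul_sub, sub_smul]
  abel

private lemma hasGradientAt_llog {lam : ℝ} (hlam : lam ≠ 0) {Θ : Set EE} (hopen : IsOpen Θ)
    {φ : EE → ℝ} (hφ : ContDiffOn ℝ (⊤ : ℕ∞) φ Θ) {x : EE} (hx : x ∈ Θ) (θstar : EE)
    (hα : 0 < 1 + lam * ⟪gradient φ x, θstar - x⟫) :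
    HasGradientAt (fun y => Llog lam φ θstar y)
      (((1 + lam * ⟪gradient φ x, θstar - x⟫)⁻¹ - 1) • gradient φ x
        - (1 + lam * ⟪gradient φ x, θstar - x⟫)⁻¹ • fderiv ℝ (gradient φ) x (θstar - x)) x := by
  have hφx : ContDiffAt ℝ 2 φ x := ((hφ x hx).contDiffAt (hopen.mem_nhds hx)).of_le (WithTop.coe_le_coe.mpr le_top)
  have hH := gradient_hasFDerivAt_aux hφx
  have hid : HasFDerivAt (fun y : EE => θstar - y) (-(ContinuousLinearMap.id ℝ EE)) x :=
    (hasFDerivAt_id x).const_sub θstar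
  have hβ := hH.inner (𝕜 := ℝ) hid
  set B := (fderivInnerCLM ℝ (gradient φ x, θstar - x)).comp
      ((fderiv ℝ (gradient φ) x).prod (-(ContinuousLinearMap.id ℝ EE))) with hB
  set α := 1 + lam * ⟪gradient φ x, θstar - x⟫ with hα_def
  have hlog : HasFDerivAt (fun y => Real.log (1 + lam * ⟪gradient φ y, θstar - y⟫))
      (α⁻¹ • (lam • B)) x := by
    have h5 : HasFDerivAt (fun y => 1 + lam * ⟪gradient φ y, θstar - y⟫) (lam • B) x :=
      (hβ.const_mul lam).const_add 1
    exact h5.log hα.ne'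
  have hφ1 : HasFDerivAt φ ((InnerProductSpace.toDual ℝ EE) (gradient φ x)) x :=
    ((hφx.differentiableAt (by norm_num)).hasGradientAt).hasFDerivAt
  have h6 : HasFDerivAt (fun y => Llog lam φ θstar y)
      (-(InnerProductSpace.toDual ℝ EE) (gradient φ x)
        - (1 / lam) • (α⁻¹ • (lam • B))) x := by
    have h7 := (hφ1.const_sub (φ θstar)).sub (hlog.const_mul (1 / lam))
    exact h7
  rw [hasGradientAt_iff_hasFDerivAt]
  have he : (InnerProductSpace.toDual ℝ EE) ((α⁻¹ - 1) • gradient φ x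
      - α⁻¹ • fderiv ℝ (gradient φ) x (θstar - x))
      = -(InnerProductSpace.toDual ℝ EE) (gradient φ x) - (1 / lam) • (α⁻¹ • (lam • B)) := by
    apply ContinuousLinearMap.ext
    intro v
    simp only [InnerProductSpace.toDual_apply_apply, ContinuousLinearMap.sub_apply,
      ContinuousLinearMap.neg_apply, ContinuousLinearMap.coe_smul', Pi.smul_apply, hB,
      ContinuousLinearMap.comp_apply, ContinuousLinearMap.prod_apply, fderivInnerCLM_apply,
      ContinuousLinearMap.id_apply, smul_eq_mul]
    rw [inner_sub_left, real_inner_smul_left, real_inner_smul_left,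
      gradient_fderiv_symm_aux hφx v (θstar - x), inner_neg_right]
    have hαne : α ≠ 0 := hα.ne'
    field_simp
    ring
  rw [he]
  exact h6

end AuxProofStmt9

/-- Proposition 3.3(i), primal flow: the conformal mirror descent trajectory
for `f(θ) = L_{λ,φ}[θ* : θ]` follows a time-changed primal straight line toward `θ*`. -/
theorem stmt_9 {d : ℕ} (lam : ℝ) (hlam : lam ≠ 0)
    (Θ : Set (EuclideanSpace ℝ (Fin d))) (hopen : IsOpen Θ) (hconvΘ : Convex ℝ Θ)
    (φ : EuclideanSpace ℝ (Fin d) → ℝ) (hreg : IsRegularCConvex lam Θ φ)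
    (θstar : EuclideanSpace ℝ (Fin d)) (hθstar : θstar ∈ Θ)
    (I : Set ℝ) (hI : I.OrdConnected)
    (θ dθ : ℝ → EuclideanSpace ℝ (Fin d)) (hmem : ∀ t ∈ I, θ t ∈ Θ)
    (hpos : ∀ t ∈ I, 0 < 1 + lam * ⟪gradient φ (θ t), θstar - θ t⟫)
    (htraj : IsCMDTrajectory lam φ (fun x => Llog lam φ θstar x) I θ dθ) :
    ∃ a : ℝ → ℝ, ∀ t ∈ I, dθ t = a t • (θstar - θ t) := by
  refine ⟨fun t => (1 + lam * ⟪gradient φ (θ t), θstar - θ t⟫)⁻¹, fun t ht => ?_⟩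
  set x := θ t with hx_def
  have hxΘ : x ∈ Θ := hmem t ht
  have hφx : ContDiffAt ℝ 2 φ x :=
    ((hreg.1 x hxΘ).contDiffAt (hopen.mem_nhds hxΘ)).of_le (WithTop.coe_le_coe.mpr le_top)
  set α := 1 + lam * ⟪gradient φ x, θstar - x⟫ with hα_def
  have hα : 0 < α := hpos t ht
  -- gradient of the objective
  have hgrad : gradient (fun y => Llog lam φ θstar y) x
      = (α⁻¹ - 1) • gradient φ x - α⁻¹ • fderiv ℝ (gradient φ) x (θstar - x) :=
    (hasGradientAt_llog hlam hopen hreg.1 hxΘ θstar hα).gradient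
  have htr : Glam lam φ x (dθ t) = -(gradient (fun y => Llog lam φ θstar y) x) :=
    (htraj t ht).2
  -- the candidate solution
  have hGv : Glam lam φ x (α⁻¹ • (θstar - x))
      = -(gradient (fun y => Llog lam φ θstar y) x) := by
    rw [hgrad]
    unfold Glam
    rw [(fderiv ℝ (gradient φ) x).map_smul, real_inner_smul_right]
    have hc : lam * (α⁻¹ * ⟪gradient φ x, θstar - x⟫) = 1 - α⁻¹ := by
      have hαne : α ≠ 0 := hα.ne'
      set s := ⟪gradient φ x, θstar - x⟫ with hs
      rw [hα_def] at hαne ⊢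
      field_simp
      ring
    rw [hc]
    module
  -- positivity of the quadratic form of Glam
  have hposG : ∀ u : EuclideanSpace ℝ (Fin d), u ≠ 0 → 0 < ⟪u, Glam lam φ x u⟫ := by
    intro u hu
    have h1 := hreg.2.2.1 x hxΘ u hu
    rw [fderiv_gradient_philam hlam hopen hreg.1 hxΘ u, real_inner_smul_right] at h1
    have he : 0 < Real.exp (lam * φ x) := Real.exp_pos _
    nlinarith [h1, he]
  -- conclude
  have hzero : dθ t - α⁻¹ • (θstar - x) = 0 := by
    by_contra hne
    have hp := hposG _ hne
    rw [Glam_sub_aux, htr, hGv, sub_self, inner_zero_right] at hp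
    exact lt_irrefl 0 hp
  have : dθ t = α⁻¹ • (θstar - x) := sub_eq_zero.mp hzero
  exact this
end

section
/- (Proposition 3.3(ii), dual flow.) Let λ ∈ ℝ \ {0}, let Θ ⊆ ℝ^d be open and convex, let φ : Θ → ℝ be regular c_λ-convex, and fix θ* ∈ Θ with η* := ∇^{(λ)}φ(θ*). Suppose θ : I → Θ is a conformal mirror descent trajectory for the function f(θ) := L_{λ,φ}[θ : θ*], where 1 + λ⟨∇φ(θ*), θ_t − θ*⟩ > 0 for all t ∈ I. Then the dual variable η_t := ∇^{(λ)}φ(θ_t) satisfies η'_t = −((1 + λ⟨θ_t, η_t⟩)/(1 + λ⟨θ_t, η*⟩)) (η_t − η*) for all t ∈ I; in particular, the trajectory follows a time-changed straight line from η_0 to η* in the dual coordinates. -/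
open Real Set
open scoped RealInnerProductSpace

lemma aux_inv (lam p : ℝ) (h : 1 - lam * p ≠ 0) :
    1 + lam * ((1 - lam * p)⁻¹ * p) = (1 - lam * p)⁻¹ := by
  field_simp
  ring

lemma aux_div (ss lam q : ℝ) (h : ss ≠ 0) :
    1 + lam * (ss⁻¹ * q) = (ss + lam * q) / ss := by
  field_simp

lemma aux_grad_Llog {d : ℕ} (lam : ℝ) (hlam : lam ≠ 0) (φ : EuclideanSpace ℝ (Fin d) → ℝ)
    (x θstar : EuclideanSpace ℝ (Fin d))
    (hφ : DifferentiableAt ℝ φ x)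
    (hc : 0 < 1 + lam * ⟪gradient φ θstar, x - θstar⟫) :
    gradient (fun y => Llog lam φ y θstar) x
      = gradient φ x - (1 + lam * ⟪gradient φ θstar, x - θstar⟫)⁻¹ • gradient φ θstar := by
  set gs := gradient φ θstar with hgs
  set c := 1 + lam * ⟪gs, x - θstar⟫ with hcdef
  have h0 : HasFDerivAt (fun y : EuclideanSpace ℝ (Fin d) => ⟪gs, y - θstar⟫)
      (innerSL ℝ gs) x := by
    exact (innerSL ℝ gs).hasFDerivAt.comp x ((hasFDerivAt_id x).sub_const θstar)
  have hw : HasFDerivAt (fun y : EuclideanSpace ℝ (Fin d) => 1 + lam * ⟪gs, y - θstar⟫)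
      (lam • innerSL ℝ gs) x := (h0.const_mul lam).const_add 1
  have hlog : HasFDerivAt
      (fun y : EuclideanSpace ℝ (Fin d) => Real.log (1 + lam * ⟪gs, y - θstar⟫))
      (c⁻¹ • (lam • innerSL ℝ gs)) x := by
    exact (Real.hasDerivAt_log hc.ne').comp_hasFDerivAt x hw
  have hF : HasFDerivAt (fun y => Llog lam φ y θstar)
      (fderiv ℝ φ x - (1/lam) • (c⁻¹ • (lam • innerSL ℝ gs))) x :=
    (hφ.hasFDerivAt.sub_const _).sub (hlog.const_mul (1/lam))
  have hg : HasGradientAt (fun y => Llog lam φ y θstar) (gradient φ x - c⁻¹ • gs) x := by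
    rw [hasGradientAt_iff_hasFDerivAt]
    refine hF.congr_fderiv ?_
    apply ContinuousLinearMap.ext; intro v
    have hfd : fderiv ℝ φ x = InnerProductSpace.toDual ℝ _ (gradient φ x) :=
      ((InnerProductSpace.toDual ℝ _).apply_symm_apply _).symm
    rw [hfd]
    simp only [ContinuousLinearMap.sub_apply, ContinuousLinearMap.smul_apply, innerSL_apply_apply, smul_eq_mul, InnerProductSpace.toDual_apply_apply, inner_sub_left, inner_smul_left,
      real_inner_smul_left, conj_trivial]
    field_simp
  exact hg.gradient

/-- Proposition 3.3(ii), dual flow: for `f(θ) = L_{λ,φ}[θ : θ*]` the dual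
variable satisfies `η'_t = −((1 + λ⟨θ_t, η_t⟩)/(1 + λ⟨θ_t, η*⟩))(η_t − η*)`. -/
theorem stmt_10 {d : ℕ} (lam : ℝ) (hlam : lam ≠ 0)
    (Θ : Set (EuclideanSpace ℝ (Fin d))) (hopen : IsOpen Θ) (hconvΘ : Convex ℝ Θ)
    (φ : EuclideanSpace ℝ (Fin d) → ℝ) (hreg : IsRegularCConvex lam Θ φ)
    (θstar : EuclideanSpace ℝ (Fin d)) (hθstar : θstar ∈ Θ)
    (I : Set ℝ) (hI : I.OrdConnected)
    (θ dθ : ℝ → EuclideanSpace ℝ (Fin d)) (hmem : ∀ t ∈ I, θ t ∈ Θ)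
    (hpos : ∀ t ∈ I, 0 < 1 + lam * ⟪gradient φ θstar, θ t - θstar⟫)
    (htraj : IsCMDTrajectory lam φ (fun x => Llog lam φ x θstar) I θ dθ) :
    ∀ t ∈ I,
      HasDerivAt (fun u => mirrorMap lam φ (θ u))
        (-(((1 + lam * ⟪θ t, mirrorMap lam φ (θ t)⟫) /
              (1 + lam * ⟪θ t, mirrorMap lam φ θstar⟫)) •
            (mirrorMap lam φ (θ t) - mirrorMap lam φ θstar))) t := by
  obtain ⟨hsm, -, -, hspos⟩ := hreg
  intro t ht
  obtain ⟨hθd, heq⟩ := htraj t ht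
  have hxΘ : θ t ∈ Θ := hmem t ht
  set x := θ t with hxdef
  set g := gradient φ x with hgdef
  set gs := gradient φ θstar with hgsdef
  have hc : 0 < 1 + lam * ⟪gs, x - θstar⟫ := hpos t ht
  set c := 1 + lam * ⟪gs, x - θstar⟫ with hcdef
  have hsx : 0 < 1 - lam * ⟪g, x⟫ := hspos x hxΘ
  have hss : 0 < 1 - lam * ⟪gs, θstar⟫ := hspos θstar hθstar
  set s := 1 - lam * ⟪g, x⟫ with hsdef
  set ss := 1 - lam * ⟪gs, θstar⟫ with hssdef
  -- smoothness and differentiability of the gradient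
  have hφat : ContDiffAt ℝ (⊤ : ℕ∞) φ x := hsm.contDiffAt (hopen.mem_nhds hxΘ)
  have hφdiff : DifferentiableAt ℝ φ x := hφat.differentiableAt (by simp)
  have hgdiff : DifferentiableAt ℝ (gradient φ) x := by
    have h2 : DifferentiableAt ℝ (fderiv ℝ φ) x :=
      (hφat.fderiv_right (m := 1) (by exact WithTop.coe_le_coe.mpr le_top)).differentiableAt one_ne_zero
    have : gradient φ = fun y =>
        (InnerProductSpace.toDual ℝ (EuclideanSpace ℝ (Fin d))).symm (fderiv ℝ φ y) := rfl
    rw [this]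
    exact ((InnerProductSpace.toDual ℝ _).symm.toContinuousLinearEquiv.differentiableAt).comp x h2
  set D := fderiv ℝ (gradient φ) x with hDdef
  have hD : HasFDerivAt (gradient φ) D x := hgdiff.hasFDerivAt
  -- the trajectory equation, solved for D (dθ t)
  have hgradf : gradient (fun y => Llog lam φ y θstar) x = g - c⁻¹ • gs :=
    aux_grad_Llog lam hlam φ x θstar hφdiff hc
  have hDdθ : D (dθ t) = c⁻¹ • gs - g - (lam * ⟪g, dθ t⟫) • g := by
    have hh : D (dθ t) + (lam * ⟪g, dθ t⟫) • g = -(g - c⁻¹ • gs) := by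
      rw [← hgradf]; exact heq
    rw [eq_sub_of_add_eq hh]; abel
  -- derivative of u ↦ gradient φ (θ u)
  have hu : HasDerivAt (fun u => gradient φ (θ u)) (D (dθ t)) t := hD.comp_hasDerivAt t hθd
  have hinn : HasDerivAt (fun u => ⟪gradient φ (θ u), θ u⟫)
      (⟪g, dθ t⟫ + ⟪D (dθ t), x⟫) t := hu.inner ℝ hθd
  have hσ : HasDerivAt (fun u => 1 - lam * ⟪gradient φ (θ u), θ u⟫)
      (-(lam * (⟪g, dθ t⟫ + ⟪D (dθ t), x⟫))) t := by
    simpa using (hinn.const_mul lam).const_sub 1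
  have hσinv : HasDerivAt (fun u => (1 - lam * ⟪gradient φ (θ u), θ u⟫)⁻¹)
      (-(-(lam * (⟪g, dθ t⟫ + ⟪D (dθ t), x⟫))) / s ^ 2) t := hσ.inv hsx.ne'
  have hmain : HasDerivAt (fun u => mirrorMap lam φ (θ u))
      (s⁻¹ • D (dθ t) + (-(-(lam * (⟪g, dθ t⟫ + ⟪D (dθ t), x⟫))) / s ^ 2) • g) t := by
    have := hσinv.smul hu
    exact this
  convert hmain using 1
  -- now pure algebra
  have h1 : ⟪D (dθ t), x⟫ = c⁻¹ * ⟪gs, x⟫ - ⟪g, x⟫ - lam * ⟪g, dθ t⟫ * ⟪g, x⟫ := by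
    rw [hDdθ]
    simp only [inner_sub_left, real_inner_smul_left]
  rw [h1, hDdθ]
  have hcq : c = ss + lam * ⟪gs, x⟫ := by
    rw [hcdef, hssdef, inner_sub_right]; ring
  have hxg : ⟪x, g⟫ = ⟪g, x⟫ := real_inner_comm _ _
  have hxgs : ⟪x, gs⟫ = ⟪gs, x⟫ := real_inner_comm _ _
  simp only [mirrorMap, ← hgdef, ← hgsdef, ← hsdef, ← hssdef, real_inner_smul_right]
  rw [hxg, hxgs]
  have hs0 : s ≠ 0 := hsx.ne'
  have hss0 : ss ≠ 0 := hss.ne'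
  have hc0 : c ≠ 0 := hc.ne'
  have hsne : (1 : ℝ) - lam * ⟪g, x⟫ ≠ 0 := by rw [← hsdef]; exact hs0
  have hcne : ss + lam * ⟪gs, x⟫ ≠ 0 := by rw [← hcq]; exact hc0
  have h2 : 1 + lam * (s⁻¹ * ⟪g, x⟫) = s⁻¹ := by
    rw [hsdef]; exact aux_inv lam ⟪g, x⟫ hsne
  have h3 : 1 + lam * (ss⁻¹ * ⟪gs, x⟫) = c / ss := by
    rw [hcq]; exact aux_div ss lam ⟪gs, x⟫ hss0
  rw [h2, h3, hcq, hsdef]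
  generalize ⟪g, dθ t⟫ = a
  generalize hgx : ⟪g, x⟫ = p at hsne ⊢
  generalize hgsx : ⟪gs, x⟫ = q at hcne ⊢
  match_scalars <;> (field_simp; try ring)
end

section
/- Let λ ∈ ℝ \ {0}, let Θ ⊆ ℝ^d be open and convex, let φ : Θ → ℝ be regular c_λ-convex, let f : Θ → ℝ be differentiable, and fix θ* ∈ Θ. Suppose θ : I → Θ is a conformal mirror descent trajectory for f, and write η_t := ∇^{(λ)}φ(θ_t). Assume 1 + λ⟨∇φ(θ_t), θ* − θ_t⟩ > 0 and 1 + λ⟨θ*, η_t⟩ > 0 for all t ∈ I. Then t ↦ L_{λ,φ}[θ* : θ_t] is differentiable and (d/dt) L_{λ,φ}[θ* : θ_t] = ((1 + λ⟨θ_t, η_t⟩)/(1 + λ⟨θ*, η_t⟩)) ⟨∇f(θ_t), θ* − θ_t⟩ for all t ∈ I. -/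
open Real Set
open scoped RealInnerProductSpace

/-- derivative of `t ↦ L_{λ,φ}[θ* : θ_t]` along a conformal mirror descent
trajectory equals `((1 + λ⟨θ_t, η_t⟩)/(1 + λ⟨θ*, η_t⟩))⟨∇f(θ_t), θ* − θ_t⟩`. -/
theorem stmt_11 {d : ℕ} (lam : ℝ) (hlam : lam ≠ 0)
    (Θ : Set (EuclideanSpace ℝ (Fin d))) (hopen : IsOpen Θ) (hconvΘ : Convex ℝ Θ)
    (φ : EuclideanSpace ℝ (Fin d) → ℝ) (hreg : IsRegularCConvex lam Θ φ)
    (f : EuclideanSpace ℝ (Fin d) → ℝ) (hf : DifferentiableOn ℝ f Θ)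
    (θstar : EuclideanSpace ℝ (Fin d)) (hθstar : θstar ∈ Θ)
    (I : Set ℝ) (hI : I.OrdConnected)
    (θ dθ : ℝ → EuclideanSpace ℝ (Fin d)) (hmem : ∀ t ∈ I, θ t ∈ Θ)
    (htraj : IsCMDTrajectory lam φ f I θ dθ)
    (hpos1 : ∀ t ∈ I, 0 < 1 + lam * ⟪gradient φ (θ t), θstar - θ t⟫)
    (hpos2 : ∀ t ∈ I, 0 < 1 + lam * ⟪θstar, mirrorMap lam φ (θ t)⟫) :
    ∀ t ∈ I,
      HasDerivAt (fun u => Llog lam φ θstar (θ u))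
        (((1 + lam * ⟪θ t, mirrorMap lam φ (θ t)⟫) /
            (1 + lam * ⟪θstar, mirrorMap lam φ (θ t)⟫)) *
          ⟪gradient f (θ t), θstar - θ t⟫) t := by
  intro t ht
  obtain ⟨hθ', hcmd⟩ := htraj t ht
  set x := θ t with hx
  have hxΘ : x ∈ Θ := hmem t ht
  have hnhds : Θ ∈ nhds x := hopen.mem_nhds hxΘ
  have hC2 : ContDiffAt ℝ 2 φ x := (hreg.1.contDiffAt hnhds).of_le (WithTop.coe_le_coe.mpr (le_top : (2:ℕ∞) ≤ ⊤))
  -- differentiability of gradient φ at x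
  have hdfd : DifferentiableAt ℝ (fderiv ℝ φ) x :=
    (hC2.fderiv_right (m := 1) (by norm_num)).differentiableAt one_ne_zero
  have hdg : DifferentiableAt ℝ (gradient φ) x := by
    have := ((InnerProductSpace.toDual ℝ
        (EuclideanSpace ℝ (Fin d))).symm.toContinuousLinearEquiv.differentiableAt).comp x hdfd
    exact this
  set g : EuclideanSpace ℝ (Fin d) := gradient φ x with hg
  set Hv : EuclideanSpace ℝ (Fin d) := fderiv ℝ (gradient φ) x (dθ t) with hHv
  set w : EuclideanSpace ℝ (Fin d) := θstar - x with hw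
  set a : ℝ := ⟪g, dθ t⟫ with ha
  -- derivative of u ↦ φ (θ u)
  have h1 : HasDerivAt (fun u => φ (θ u)) a t := by
    have hφd : DifferentiableAt ℝ φ x := hC2.differentiableAt two_ne_zero
    have := (hφd.hasGradientAt.hasFDerivAt).comp_hasDerivAt t hθ'
    simpa only [InnerProductSpace.toDual_apply_apply, Function.comp_def] using this
  -- derivative of u ↦ gradient φ (θ u)
  have h2 : HasDerivAt (fun u => gradient φ (θ u)) Hv t :=
    (hdg.hasFDerivAt).comp_hasDerivAt t hθ'
  have h3 : HasDerivAt (fun u => θstar - θ u) (-(dθ t)) t := hθ'.const_sub θstar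
  have hinner : HasDerivAt (fun u => ⟪gradient φ (θ u), θstar - θ u⟫)
      (⟪g, -(dθ t)⟫ + ⟪Hv, w⟫) t := h2.inner ℝ h3
  have hG : HasDerivAt (fun u => 1 + lam * ⟪gradient φ (θ u), θstar - θ u⟫)
      (lam * (⟪g, -(dθ t)⟫ + ⟪Hv, w⟫)) t := (hinner.const_mul lam).const_add 1
  have hD : (0:ℝ) < 1 + lam * ⟪gradient φ x, θstar - x⟫ := hpos1 t ht
  have hlog := hG.log (ne_of_gt hD)
  have htot := (h1.const_sub (φ θstar)).sub (hlog.const_mul (1/lam))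
  simp only [Llog]
  convert htot using 1
  · rfl
  · rfl
  · rfl
  -- now the scalar identity
  have hc : (0:ℝ) < 1 - lam * ⟪g, x⟫ := hreg.2.2.2 x hxΘ
  set c : ℝ := 1 - lam * ⟪g, x⟫ with hcdef
  -- expand mirrorMap inner products
  have hmx : ⟪x, mirrorMap lam φ x⟫ = c⁻¹ * ⟪g, x⟫ := by
    rw [mirrorMap, real_inner_smul_right]
    rw [hcdef, hg, real_inner_comm x (gradient φ x)]
  have hms : ⟪θstar, mirrorMap lam φ x⟫ = c⁻¹ * ⟪g, θstar⟫ := by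
    rw [mirrorMap, real_inner_smul_right]
    rw [hcdef, hg, real_inner_comm θstar (gradient φ x)]
  -- CMD equation projected on w
  have hHvw : ⟪Hv, w⟫ = -⟪gradient f x, w⟫ - lam * a * ⟪g, w⟫ := by
    have := congrArg (fun z : EuclideanSpace ℝ (Fin d) => ⟪z, w⟫) hcmd
    simp only [Glam] at this
    rw [inner_add_left, real_inner_smul_left, inner_neg_left] at this
    linarith [this]
  have hb : ⟪g, w⟫ = ⟪g, θstar⟫ - ⟪g, x⟫ := inner_sub_right g θstar x
  have hD2 : (0:ℝ) < 1 + lam * (c⁻¹ * ⟪g, θstar⟫) := by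
    have := hpos2 t ht; rwa [← hx, hms] at this
  have hcne : c ≠ 0 := ne_of_gt hc
  have hDne : (1 + lam * ⟪g, w⟫) ≠ 0 := ne_of_gt hD
  rw [← hx, hmx, hms, hHvw, hb]
  have hDne' : (1 + lam * (⟪g, θstar⟫ - ⟪g, x⟫)) ≠ 0 := by rwa [hb] at hDne
  rw [inner_neg_right g (dθ t), ← ha]
  have hD2ne : (1 + lam * (c⁻¹ * ⟪g, θstar⟫)) ≠ 0 := ne_of_gt hD2
  set p : ℝ := ⟪g, x⟫ with hp
  set q : ℝ := ⟪g, θstar⟫ with hq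
  set F : ℝ := ⟪gradient f x, w⟫ with hF
  rw [hcdef] at hcne hD2ne ⊢
  field_simp [hcne, hDne', hD2ne, hlam]
  rw [show (1 - lam * p + lam * q) = 1 + lam * (q - p) by ring, mul_div_assoc,
    div_self hDne', mul_one]
  ring
end

section
/- (Lemma 3.4, Lyapunov property.) Let λ ∈ ℝ \ {0}, let Θ ⊆ ℝ^d be open and convex, let φ : Θ → ℝ be regular c_λ-convex, let f : Θ → ℝ be differentiable and convex on Θ, and let θ* ∈ Θ be a minimizer of f over Θ. Suppose θ : I → Θ is a conformal mirror descent trajectory for f, with η_t := ∇^{(λ)}φ(θ_t), and assume 1 + λ⟨∇φ(θ_t), θ* − θ_t⟩ > 0 and 1 + λ⟨θ*, η_t⟩ > 0 for all t ∈ I. Then the function E_t := L_{λ,φ}[θ* : θ_t] is a Lyapunov function, i.e. (d/dt) E_t ≤ 0 for all t ∈ I. -/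
open Real Set
open scoped RealInnerProductSpace

lemma grad_ineq {d : ℕ} (Θ : Set (EuclideanSpace ℝ (Fin d))) (hopen : IsOpen Θ)
    (f : EuclideanSpace ℝ (Fin d) → ℝ) (hf : DifferentiableOn ℝ f Θ)
    (hfconv : ConvexOn ℝ Θ f) (x y : EuclideanSpace ℝ (Fin d)) (hx : x ∈ Θ) (hy : y ∈ Θ) :
    ⟪gradient f x, y - x⟫ ≤ f y - f x := by
  have hfx : DifferentiableAt ℝ f x := hf.differentiableAt (hopen.mem_nhds hx)
  set w := y - x with hw
  have hc : HasDerivAt (fun s : ℝ => x + s • w) w 0 := by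
    simpa using ((hasDerivAt_id (0:ℝ)).smul_const w).const_add x
  have h0 : x + (0:ℝ) • w = x := by simp
  have hh : HasDerivAt (fun s : ℝ => f (x + s • w)) ⟪gradient f x, w⟫ 0 := by
    have hF : HasFDerivAt f ((InnerProductSpace.toDual ℝ _) (gradient f x)) (x + (0:ℝ) • w) := by
      rw [h0]; exact hfx.hasGradientAt.hasFDerivAt
    have := hF.comp_hasDerivAt 0 hc
    simpa [InnerProductSpace.toDual_apply_apply, Function.comp_def] using this
  have hslope := hasDerivAt_iff_tendsto_slope.mp hh
  have hle : ∀ᶠ s in nhdsWithin (0:ℝ) (Ioi 0),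
      slope (fun s : ℝ => f (x + s • w)) 0 s ≤ f y - f x := by
    filter_upwards [Ioc_mem_nhdsGT_of_mem (by constructor <;> norm_num : (0:ℝ) ∈ Ico (0:ℝ) 1)]
      with s hs
    have hs0 : 0 < s := hs.1
    have hs1 : s ≤ 1 := hs.2
    have hmem : x + s • w = (1 - s) • x + s • y := by
      simp [hw, smul_sub]; module
    have hcv := hfconv.2 hx hy (by linarith : (0:ℝ) ≤ 1 - s) hs0.le (by ring)
    rw [slope_def_field, h0, sub_zero, hmem, div_le_iff₀ hs0]
    simp only [smul_eq_mul] at hcv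
    nlinarith [hcv]
  have htend : Filter.Tendsto (slope (fun s : ℝ => f (x + s • w)) 0)
      (nhdsWithin (0:ℝ) (Ioi 0)) (nhds ⟪gradient f x, w⟫) :=
    hslope.mono_left (nhdsWithin_mono _ (by intro s hs; exact ne_of_gt hs))
  exact le_of_tendsto htend hle

/-- Lemma 3.4, Lyapunov property: along conformal mirror descent for a convex
`f` minimized at `θ*`, the divergence `E_t = L_{λ,φ}[θ* : θ_t]` satisfies `(d/dt)E_t ≤ 0`. -/
theorem stmt_12 {d : ℕ} (lam : ℝ) (hlam : lam ≠ 0)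
    (Θ : Set (EuclideanSpace ℝ (Fin d))) (hopen : IsOpen Θ) (hconvΘ : Convex ℝ Θ)
    (φ : EuclideanSpace ℝ (Fin d) → ℝ) (hreg : IsRegularCConvex lam Θ φ)
    (f : EuclideanSpace ℝ (Fin d) → ℝ) (hf : DifferentiableOn ℝ f Θ)
    (hfconv : ConvexOn ℝ Θ f)
    (θstar : EuclideanSpace ℝ (Fin d)) (hθstar : θstar ∈ Θ)
    (hmin : ∀ x ∈ Θ, f θstar ≤ f x)
    (I : Set ℝ) (hI : I.OrdConnected)
    (θ dθ : ℝ → EuclideanSpace ℝ (Fin d)) (hmem : ∀ t ∈ I, θ t ∈ Θ)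
    (htraj : IsCMDTrajectory lam φ f I θ dθ)
    (hpos1 : ∀ t ∈ I, 0 < 1 + lam * ⟪gradient φ (θ t), θstar - θ t⟫)
    (hpos2 : ∀ t ∈ I, 0 < 1 + lam * ⟪θstar, mirrorMap lam φ (θ t)⟫) :
    ∀ t ∈ I, ∃ e' : ℝ,
      HasDerivAt (fun u => Llog lam φ θstar (θ u)) e' t ∧ e' ≤ 0 := by

  intro t ht
  obtain ⟨hθd, hG⟩ := htraj t ht
  have hxΘ : θ t ∈ Θ := hmem t ht
  set x := θ t with hx
  set v := dθ t with hv
  set w := θstar - x with hwdef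
  -- smoothness of φ at x
  have hφsm : ContDiffAt ℝ (⊤ : ℕ∞) φ x := hreg.1.contDiffAt (hopen.mem_nhds hxΘ)
  have hφD : DifferentiableAt ℝ φ x := hφsm.differentiableAt (by simp)
  -- gradient φ is differentiable at x
  have hfd : ContDiffAt ℝ 1 (fderiv ℝ φ) x := hφsm.fderiv_right (by exact (WithTop.coe_le_coe.mpr le_top))
  have hgradC : ContDiffAt ℝ 1 (gradient φ) x := by
    have : ContDiffAt ℝ 1
        (fun y => (InnerProductSpace.toDual ℝ (EuclideanSpace ℝ (Fin d))).symm (fderiv ℝ φ y)) x :=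
      ((InnerProductSpace.toDual ℝ (EuclideanSpace ℝ (Fin d))).symm.toContinuousLinearEquiv
        : _ ≃L[ℝ] _).toContinuousLinearMap.contDiff.contDiffAt.comp x hfd
    exact this
  have hgradD : DifferentiableAt ℝ (gradient φ) x := hgradC.differentiableAt (by simp)
  set H := fderiv ℝ (gradient φ) x with hH
  -- derivative of u ↦ gradient φ (θ u)
  have hA : HasDerivAt (fun u => gradient φ (θ u)) (H v) t :=
    hgradD.hasFDerivAt.comp_hasDerivAt t hθd
  have hB : HasDerivAt (fun u => θstar - θ u) (-v) t := hθd.const_sub θstar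
  set p := ⟪gradient φ x, v⟫ with hp
  set r := ⟪gradient φ x, w⟫ with hr
  set gt0 := 1 + lam * r with hgt
  have hgtpos : 0 < gt0 := hpos1 t ht
  have hinner : HasDerivAt (fun u => ⟪gradient φ (θ u), θstar - θ u⟫)
      (⟪H v, w⟫ + ⟪gradient φ x, -v⟫) t := by
    simpa [add_comm] using hA.inner ℝ hB
  have hg : HasDerivAt (fun u => 1 + lam * ⟪gradient φ (θ u), θstar - θ u⟫)
      (lam * (⟪H v, w⟫ + ⟪gradient φ x, -v⟫)) t := (hinner.const_mul lam).const_add 1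
  have hlog : HasDerivAt (fun u => Real.log (1 + lam * ⟪gradient φ (θ u), θstar - θ u⟫))
      (lam * (⟪H v, w⟫ + ⟪gradient φ x, -v⟫) / gt0) t :=
    hg.log (ne_of_gt hgtpos)
  have hφθ : HasDerivAt (fun u => φ (θ u)) p t := by
    have := hφD.hasGradientAt.hasFDerivAt.comp_hasDerivAt t hθd
    simpa [InnerProductSpace.toDual_apply_apply, Function.comp_def, hp] using this
  set e' := -p - (1/lam) * (lam * (⟪H v, w⟫ + ⟪gradient φ x, -v⟫) / gt0) with he'
  refine ⟨e', ?_, ?_⟩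
  · have hE : HasDerivAt
        (fun u => φ θstar - φ (θ u)
          - (1/lam) * Real.log (1 + lam * ⟪gradient φ (θ u), θstar - θ u⟫)) e' t := by
      simpa [he', sub_eq_add_neg, Pi.add_def, Pi.neg_def] using (hφθ.const_sub (φ θstar)).sub (hlog.const_mul (1/lam))
    simpa [Llog] using hE
  · -- compute e' = ⟪∇f x, w⟫ / gt0
    have hHv : H v = -(gradient f x) - (lam * p) • gradient φ x := by
      have := hG
      simp only [Glam] at this
      rw [← hp, ← hH] at this
      rw [eq_sub_iff_add_eq]
      exact this
    set q := ⟪gradient f x, w⟫ with hq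
    have hHvw : ⟪H v, w⟫ = -q - lam * p * r := by
      rw [hHv, inner_sub_left, inner_neg_left, real_inner_smul_left, ← hq, ← hr]
    have hnegv : ⟪gradient φ x, -v⟫ = -p := by rw [inner_neg_right, hp]
    have he'eq : e' = q / gt0 := by
      rw [he', hHvw, hnegv]
      field_simp
      ring
    have hqle : q ≤ 0 := by
      have h1 : q ≤ f θstar - f x := grad_ineq Θ hopen f hf hfconv x θstar hxΘ hθstar
      have h2 : f θstar ≤ f x := hmin x hxΘ
      linarith
    rw [he'eq]
    exact div_nonpos_of_nonpos_of_nonneg hqle hgtpos.le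
end

section
/- Let λ ∈ ℝ \ {0}, let Θ ⊆ ℝ^d be open and convex, let φ : Θ → ℝ be regular c_λ-convex with Φ_λ := (1/λ)(exp(λφ) − 1), let f : Θ → ℝ be differentiable, and fix θ* ∈ Θ. If θ : I → Θ is a conformal mirror descent trajectory for f, then t ↦ B_{Φ_λ}[θ* : θ_t] is differentiable with (d/dt) B_{Φ_λ}[θ* : θ_t] = e^{λφ(θ_t)} ⟨∇f(θ_t), θ* − θ_t⟩ for all t ∈ I. -/
open Real Set
open scoped RealInnerProductSpace

/-- Auxiliary: the gradient of `Φ_λ` where `φ` is differentiable. -/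
lemma philam_hasGradientAt (lam : ℝ) (hlam : lam ≠ 0) {d : ℕ}
    (φ : EuclideanSpace ℝ (Fin d) → ℝ) {y : EuclideanSpace ℝ (Fin d)}
    (hφ : DifferentiableAt ℝ φ y) :
    HasGradientAt (Philam lam φ) (Real.exp (lam * φ y) • gradient φ y) y := by
  have hg : HasGradientAt φ (gradient φ y) y := hφ.hasGradientAt
  have hF : HasFDerivAt φ (InnerProductSpace.toDual ℝ _ (gradient φ y)) y := hg.hasFDerivAt
  have h1 : HasFDerivAt (fun z => (1 / lam) * (Real.exp (lam * φ z) - 1))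
      ((1 / lam) • (Real.exp (lam * φ y) • (lam • InnerProductSpace.toDual ℝ _ (gradient φ y)))) y :=
    (((hF.const_mul lam).exp).sub_const 1).const_mul (1 / lam)
  have heq : ((1 / lam) • (Real.exp (lam * φ y) • (lam • InnerProductSpace.toDual ℝ _ (gradient φ y))))
      = InnerProductSpace.toDual ℝ _ (Real.exp (lam * φ y) • gradient φ y) := by
    rw [map_smul, smul_smul, smul_smul]
    congr 1
    field_simp
  rw [heq] at h1
  have h2 : (fun z => (1 / lam) * (Real.exp (lam * φ z) - 1)) = Philam lam φ := rfl
  rw [h2] at h1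
  simpa only [LinearIsometryEquiv.symm_apply_apply] using h1.hasGradientAt

/-- along a conformal mirror descent trajectory,
`(d/dt) B_{Φ_λ}[θ* : θ_t] = e^{λφ(θ_t)}⟨∇f(θ_t), θ* − θ_t⟩`. -/
theorem stmt_13 {d : ℕ} (lam : ℝ) (hlam : lam ≠ 0)
    (Θ : Set (EuclideanSpace ℝ (Fin d))) (hopen : IsOpen Θ) (hconvΘ : Convex ℝ Θ)
    (φ : EuclideanSpace ℝ (Fin d) → ℝ) (hreg : IsRegularCConvex lam Θ φ)
    (f : EuclideanSpace ℝ (Fin d) → ℝ) (hf : DifferentiableOn ℝ f Θ)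
    (θstar : EuclideanSpace ℝ (Fin d)) (hθstar : θstar ∈ Θ)
    (I : Set ℝ) (hI : I.OrdConnected)
    (θ dθ : ℝ → EuclideanSpace ℝ (Fin d)) (hmem : ∀ t ∈ I, θ t ∈ Θ)
    (htraj : IsCMDTrajectory lam φ f I θ dθ) :
    ∀ t ∈ I,
      HasDerivAt (fun u => Breg (Philam lam φ) θstar (θ u))
        (Real.exp (lam * φ (θ t)) * ⟪gradient f (θ t), θstar - θ t⟫) t := by
  obtain ⟨hsm, -, -, -⟩ := hreg
  intro t ht
  obtain ⟨hθd, hG⟩ := htraj t ht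
  have hxΘ : θ t ∈ Θ := hmem t ht
  have hnx : Θ ∈ nhds (θ t) := hopen.mem_nhds hxΘ
  have hφdiff : ∀ y ∈ Θ, DifferentiableAt ℝ φ y := fun y hy =>
    (hsm.contDiffAt (hopen.mem_nhds hy)).differentiableAt (by simp)
  -- gradient of Φ_λ on Θ
  have hgradΦ : ∀ y ∈ Θ, gradient (Philam lam φ) y = Real.exp (lam * φ y) • gradient φ y :=
    fun y hy => (philam_hasGradientAt lam hlam φ (hφdiff y hy)).gradient
  -- differentiability of gradient φ at θ t
  have hcd : ContDiffAt ℝ (⊤ : ℕ∞) φ (θ t) := hsm.contDiffAt hnx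
  have hfd : DifferentiableAt ℝ (fderiv ℝ φ) (θ t) :=
    (hcd.fderiv_right (m := 1) (WithTop.coe_le_coe.mpr le_top)).differentiableAt one_ne_zero
  have hgφd : DifferentiableAt ℝ (gradient φ) (θ t) := by
    have h : gradient φ = fun y => (InnerProductSpace.toDual ℝ _).symm (fderiv ℝ φ y) := rfl
    rw [h]
    exact ((InnerProductSpace.toDual ℝ _).symm.toContinuousLinearEquiv.differentiableAt).comp
      (θ t) hfd
  have hD : HasFDerivAt (gradient φ) (fderiv ℝ (gradient φ) (θ t)) (θ t) := hgφd.hasFDerivAt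
  have hFφ : HasFDerivAt φ (InnerProductSpace.toDual ℝ _ (gradient φ (θ t))) (θ t) :=
    (hφdiff (θ t) hxΘ).hasGradientAt.hasFDerivAt
  have hs : HasFDerivAt (fun y => Real.exp (lam * φ y))
      (Real.exp (lam * φ (θ t)) • (lam • InnerProductSpace.toDual ℝ _ (gradient φ (θ t))))
      (θ t) := (hFφ.const_mul lam).exp
  have hsmul : HasFDerivAt (fun y => Real.exp (lam * φ y) • gradient φ y)
      (Real.exp (lam * φ (θ t)) • fderiv ℝ (gradient φ) (θ t) +
        (Real.exp (lam * φ (θ t)) •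
          (lam • InnerProductSpace.toDual ℝ _ (gradient φ (θ t)))).smulRight (gradient φ (θ t)))
      (θ t) := hs.smul hD
  set L : EuclideanSpace ℝ (Fin d) →L[ℝ] EuclideanSpace ℝ (Fin d) :=
    Real.exp (lam * φ (θ t)) • fderiv ℝ (gradient φ) (θ t) +
      (Real.exp (lam * φ (θ t)) •
        (lam • InnerProductSpace.toDual ℝ _ (gradient φ (θ t)))).smulRight (gradient φ (θ t))
    with hLdef
  have heqv : gradient (Philam lam φ) =ᶠ[nhds (θ t)]
      (fun y => Real.exp (lam * φ y) • gradient φ y) :=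
    Filter.eventuallyEq_of_mem hnx hgradΦ
  have hL : HasFDerivAt (gradient (Philam lam φ)) L (θ t) :=
    hsmul.congr_of_eventuallyEq heqv
  -- the value of L at dθ t
  have hLd : L (dθ t) = Real.exp (lam * φ (θ t)) • (-(gradient f (θ t))) := by
    rw [← hG]
    simp only [hLdef, Glam, ContinuousLinearMap.add_apply, ContinuousLinearMap.coe_smul',
      Pi.smul_apply, ContinuousLinearMap.smulRight_apply, InnerProductSpace.toDual_apply_apply,
      smul_add, smul_smul, smul_eq_mul]
    module
  -- derivatives of the pieces
  have h1 : HasDerivAt (fun u => Philam lam φ (θ u))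
      (⟪Real.exp (lam * φ (θ t)) • gradient φ (θ t), dθ t⟫) t := by
    have := ((philam_hasGradientAt lam hlam φ (hφdiff (θ t) hxΘ)).hasFDerivAt).comp_hasDerivAt
      t hθd
    simpa only [Function.comp_def, InnerProductSpace.toDual_apply_apply] using this
  have h2 : HasDerivAt (fun u => gradient (Philam lam φ) (θ u)) (L (dθ t)) t :=
    hL.comp_hasDerivAt t hθd
  have h3 : HasDerivAt (fun u => θstar - θ u) (-(dθ t)) t := hθd.const_sub θstar
  have h4 := h2.inner ℝ h3
  have htot := ((hasDerivAt_const t (Philam lam φ θstar)).sub h1).sub h4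
  have hfun : (fun u => Philam lam φ θstar - Philam lam φ (θ u) -
      ⟪gradient (Philam lam φ) (θ u), θstar - θ u⟫) =
      (fun u => Breg (Philam lam φ) θstar (θ u)) := rfl
  change HasDerivAt (fun u => Breg (Philam lam φ) θstar (θ u)) _ t at htot
  convert htot using 1
  rw [hLd, hgradΦ (θ t) hxΘ]
  simp only [inner_neg_left, inner_neg_right, real_inner_smul_left]
  ring
end

section
/- (Theorem 4.1, online natural gradient step.) Let λ ∈ ℝ \ {0}, let Θ ⊆ ℝ^d be open and convex, and let φ : Θ → ℝ be regular c_λ-convex. Fix θ ∈ Θ and y ∈ ℝ^d with 1 + λ⟨θ, y⟩ > 0, set η := ∇^{(λ)}φ(θ) and Π_λ(θ) := 1 + λ⟨θ, η⟩, and let g := ∇φ(θ) − y/(1 + λ⟨θ, y⟩) (the gradient at θ of the log-loss θ ↦ φ(θ) − (1/λ)log(1 + λ⟨θ, y⟩)). Then for every δ > 0 the natural gradient update η − δ Π_λ(θ)(I_d + λ η θ^T) g equals η + δ ((1 + λ⟨θ, η⟩)/(1 + λ⟨θ, y⟩)) (y − η), where (I_d + λ η θ^T)v = v + λ⟨θ,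 v⟩η. -/
open Real Set
open scoped RealInnerProductSpace

/-- Theorem 4.1, online natural gradient step: the natural gradient update
`η − δΠ_λ(θ)(I_d + ληθᵀ)g` for the log-loss gradient `g = ∇φ(θ) − y/(1 + λ⟨θ, y⟩)`
equals `η + δ((1 + λ⟨θ, η⟩)/(1 + λ⟨θ, y⟩))(y − η)`. -/
theorem stmt_15 {d : ℕ} (lam : ℝ) (hlam : lam ≠ 0)
    (Θ : Set (EuclideanSpace ℝ (Fin d))) (hopen : IsOpen Θ) (hconvΘ : Convex ℝ Θ)
    (φ : EuclideanSpace ℝ (Fin d) → ℝ) (hreg : IsRegularCConvex lam Θ φ)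
    (θ : EuclideanSpace ℝ (Fin d)) (hθ : θ ∈ Θ)
    (y : EuclideanSpace ℝ (Fin d)) (hy : 0 < 1 + lam * ⟪θ, y⟫)
    (η g : EuclideanSpace ℝ (Fin d)) (hη : η = mirrorMap lam φ θ)
    (hg : g = gradient φ θ - (1 + lam * ⟪θ, y⟫)⁻¹ • y)
    (δ : ℝ) (hδ : 0 < δ) :
    η - δ • ((1 + lam * ⟪θ, η⟫) • (g + (lam * ⟪θ, g⟫) • η)) =
      η + (δ * ((1 + lam * ⟪θ, η⟫) / (1 + lam * ⟪θ, y⟫))) • (y - η) := by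
  have hp : 0 < 1 - lam * ⟪gradient φ θ, θ⟫ := hreg.2.2.2 θ hθ
  set G := gradient φ θ with hG
  have hp0 : (1 - lam * ⟪G, θ⟫ : ℝ) ≠ 0 := ne_of_gt hp
  have hq0 : (1 + lam * ⟪θ, y⟫ : ℝ) ≠ 0 := ne_of_gt hy
  subst hη hg
  simp only [mirrorMap, ← hG, inner_smul_right, inner_sub_right, real_inner_comm G θ]
  rw [div_eq_mul_inv]
  generalize (⟪G, θ⟫ : ℝ) = s at hp0 ⊢
  generalize (⟪θ, y⟫ : ℝ) = u at hq0 ⊢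
  match_scalars <;> field_simp <;> ring
end
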